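/- arXiv:1706.08732 — 9 statements merged into one kernel-verified Lean document; each statement's English description precedes it below -/
import Mathlib

section
/- Let A ∈ ℝ^{m×n}, b ∈ ℝ^m, μ ≥ 0, and let κ : ℝ^n → ℝ be convex. If x₁ and x₂ both minimize the function x ↦ (1/2)‖Ax − b‖² + μκ(x) over ℝ^n, then Ax₁ = Ax₂; equivalently, the residual b − Ax is invariant over the solution set of this problem. -/
open Matrix

noncomputable def l2norm {m : ℕ} (v : Fin m → ℝ) : ℝ := Real.sqrt (∑ i, (v i) ^ 2)

lemma l2norm_sq {m : ℕ} (v : Fin m → ℝ) : (l2norm v) ^ 2 = ∑ i, (v i) ^ 2 := by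
  unfold l2norm
  exact Real.sq_sqrt (Finset.sum_nonneg fun i _ => sq_nonneg _)

/-- **Proposition 1 (i).** If `x₁` and `x₂` both minimize
`x ↦ (1/2)‖Ax − b‖² + μ κ(x)` (with `μ ≥ 0` and `κ` convex), then `A x₁ = A x₂`. -/
theorem residual_invariant {m n : ℕ} (A : Matrix (Fin m) (Fin n) ℝ) (b : Fin m → ℝ)
    (μ : ℝ) (hμ : 0 ≤ μ) (κ : (Fin n → ℝ) → ℝ) (hκ : ConvexOn ℝ Set.univ κ)
    (x₁ x₂ : Fin n → ℝ)
    (h₁ : ∀ x : Fin n → ℝ,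
      (1/2) * (l2norm (A.mulVec x₁ - b))^2 + μ * κ x₁ ≤
      (1/2) * (l2norm (A.mulVec x - b))^2 + μ * κ x)
    (h₂ : ∀ x : Fin n → ℝ,
      (1/2) * (l2norm (A.mulVec x₂ - b))^2 + μ * κ x₂ ≤
      (1/2) * (l2norm (A.mulVec x - b))^2 + μ * κ x) :
    A.mulVec x₁ = A.mulVec x₂ := by
  set y₁ := A.mulVec x₁ with hy₁
  set y₂ := A.mulVec x₂ with hy₂
  set xm : Fin n → ℝ := (1/2 : ℝ) • x₁ + (1/2 : ℝ) • x₂ with hxm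
  have hymid : A.mulVec xm = (1/2 : ℝ) • y₁ + (1/2 : ℝ) • y₂ := by
    rw [hxm, Matrix.mulVec_add, Matrix.mulVec_smul, Matrix.mulVec_smul]
  -- sum-of-squares parallelogram-type identity
  have hsq : ∑ i, ((A.mulVec xm - b) i) ^ 2 =
      (1/2) * ∑ i, ((y₁ - b) i) ^ 2 + (1/2) * ∑ i, ((y₂ - b) i) ^ 2
        - (1/4) * ∑ i, ((y₁ - y₂) i) ^ 2 := by
    rw [hymid, Finset.mul_sum, Finset.mul_sum, Finset.mul_sum,
      ← Finset.sum_add_distrib, ← Finset.sum_sub_distrib]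
    apply Finset.sum_congr rfl
    intro i _
    simp only [Pi.add_apply, Pi.sub_apply, Pi.smul_apply, smul_eq_mul]
    ring
  -- equal optimal values
  have hF : (1/2) * (l2norm (y₁ - b))^2 + μ * κ x₁ =
      (1/2) * (l2norm (y₂ - b))^2 + μ * κ x₂ :=
    le_antisymm (h₁ x₂) (h₂ x₁)
  have hκm : κ xm ≤ (1/2) * κ x₁ + (1/2) * κ x₂ := by
    have := hκ.2 (Set.mem_univ x₁) (Set.mem_univ x₂)
      (by norm_num : (0:ℝ) ≤ 1/2) (by norm_num : (0:ℝ) ≤ 1/2) (by norm_num)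
    rw [hxm]; simpa [smul_eq_mul] using this
  have h1m := h₁ xm
  rw [l2norm_sq (A.mulVec xm - b), hsq] at h1m
  have hμκ : μ * κ xm ≤ μ * ((1/2) * κ x₁ + (1/2) * κ x₂) :=
    mul_le_mul_of_nonneg_left hκm hμ
  have key : ∑ i, ((y₁ - y₂) i) ^ 2 ≤ 0 := by
    have e1 : (l2norm (y₁ - b))^2 = ∑ i, ((y₁ - b) i) ^ 2 := l2norm_sq _
    have e2 : (l2norm (y₂ - b))^2 = ∑ i, ((y₂ - b) i) ^ 2 := l2norm_sq _
    rw [e1] at h1m hF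
    rw [e2] at hF
    nlinarith [h1m, hμκ, hF]
  have hzero : ∑ i, ((y₁ - y₂) i) ^ 2 = 0 :=
    le_antisymm key (Finset.sum_nonneg fun i _ => sq_nonneg _)
  have := (Finset.sum_eq_zero_iff_of_nonneg (fun i _ => sq_nonneg ((y₁ - y₂) i))).mp hzero
  funext i
  have hi := this i (Finset.mem_univ i)
  have : (y₁ - y₂) i = 0 := by
    have := sq_eq_zero_iff.mp hi
    exact this
  simpa [sub_eq_zero] using this
end

section
/- Let A ∈ ℝ^{m×n}, b ∈ ℝ^m, μ ≥ 0, and let κ : ℝ^n → ℝ satisfy κ(0) = 0. If ⟨Aᵀb, x⟩ ≤ μκ(x) for all x ∈ ℝ^n, then 0 is a minimizer of x ↦ (1/2)‖Ax − b‖² + μκ(x) over ℝ^n; moreover, b is the unique maximizer of ξ ↦ −(1/2)‖ξ‖² + ⟨b, ξ⟩ over the set {ξ ∈ ℝ^m : ⟨Aᵀξ, x⟩ ≤ μκ(x) for all x ∈ ℝ^n}. -/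
open Matrix

def dot {m : ℕ} (u v : Fin m → ℝ) : ℝ := ∑ i, u i * v i

lemma sq_l2norm {m : ℕ} (v : Fin m → ℝ) : (l2norm v)^2 = ∑ i, (v i)^2 :=
  Real.sq_sqrt (Finset.sum_nonneg fun i _ => sq_nonneg _)

lemma dot_trans {m n : ℕ} (A : Matrix (Fin m) (Fin n) ℝ) (u : Fin m → ℝ) (x : Fin n → ℝ) :
    dot (Aᵀ.mulVec u) x = ∑ i, A.mulVec x i * u i := by
  simp only [dot, Matrix.mulVec, dotProduct, Matrix.transpose_apply,
    Finset.sum_mul, Finset.mul_sum]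
  rw [Finset.sum_comm]
  apply Finset.sum_congr rfl; intro i _
  apply Finset.sum_congr rfl; intro j _
  ring

lemma expand_sub {m : ℕ} (u v : Fin m → ℝ) :
    ∑ i, (u i - v i)^2 = ∑ i, (u i)^2 - 2 * ∑ i, u i * v i + ∑ i, (v i)^2 := by
  rw [Finset.mul_sum, ← Finset.sum_sub_distrib, ← Finset.sum_add_distrib]
  apply Finset.sum_congr rfl; intro i _; ring

/-- **Proposition 1 (ii).** If `⟨Aᵀb, x⟩ ≤ μ κ(x)` for all `x` (i.e. `μ ≥ κ°(Aᵀb)`),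
then `0` minimizes `x ↦ (1/2)‖Ax − b‖² + μ κ(x)` and `b` is the unique maximizer of
`ξ ↦ −(1/2)‖ξ‖² + ⟨b, ξ⟩` over the dual feasible set. -/
theorem zero_min_and_b_unique_max {m n : ℕ} (A : Matrix (Fin m) (Fin n) ℝ) (b : Fin m → ℝ)
    (μ : ℝ) (hμ : 0 ≤ μ) (κ : (Fin n → ℝ) → ℝ) (hκ0 : κ 0 = 0)
    (hpolar : ∀ x : Fin n → ℝ, dot (Aᵀ.mulVec b) x ≤ μ * κ x) :
    (∀ x : Fin n → ℝ,
      (1/2) * (l2norm (A.mulVec (0 : Fin n → ℝ) - b))^2 + μ * κ 0 ≤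
      (1/2) * (l2norm (A.mulVec x - b))^2 + μ * κ x) ∧
    (∀ ξ : Fin m → ℝ, (∀ x : Fin n → ℝ, dot (Aᵀ.mulVec ξ) x ≤ μ * κ x) →
      (-(1/2) * (l2norm ξ)^2 + dot b ξ ≤ -(1/2) * (l2norm b)^2 + dot b b) ∧
      (-(1/2) * (l2norm ξ)^2 + dot b ξ = -(1/2) * (l2norm b)^2 + dot b b → ξ = b)) := by
  constructor
  · intro x
    have h1 := hpolar x
    rw [dot_trans] at h1
    have hAx : (0:ℝ) ≤ ∑ i, (A.mulVec x i)^2 :=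
      Finset.sum_nonneg fun i _ => sq_nonneg _
    rw [hκ0, sq_l2norm, sq_l2norm, Matrix.mulVec_zero]
    have e0 : ∑ i, ((0:Fin m → ℝ) i - b i)^2 = ∑ i, (b i)^2 := by
      apply Finset.sum_congr rfl; intro i _; simp
    have e1 : ∑ i, (A.mulVec x i - b i)^2
        = ∑ i, (A.mulVec x i)^2 - 2 * ∑ i, A.mulVec x i * b i + ∑ i, (b i)^2 := by
      simpa using expand_sub (A.mulVec x) b
    simp only [Pi.sub_apply] at e0 e1 ⊢
    rw [e0, e1]
    linarith
  · intro ξ _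
    have key : ∑ i, (ξ i - b i)^2 = ∑ i, (ξ i)^2 - 2 * ∑ i, ξ i * b i + ∑ i, (b i)^2 :=
      expand_sub ξ b
    have hnn : (0:ℝ) ≤ ∑ i, (ξ i - b i)^2 := Finset.sum_nonneg fun i _ => sq_nonneg _
    have hdb : dot b ξ = ∑ i, ξ i * b i := by
      simp only [dot]; apply Finset.sum_congr rfl; intro i _; ring
    have hdbb : dot b b = ∑ i, (b i)^2 := by
      simp only [dot]; apply Finset.sum_congr rfl; intro i _; ring
    constructor
    · rw [sq_l2norm, sq_l2norm, hdb, hdbb]; linarith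
    · intro heq
      rw [sq_l2norm, sq_l2norm, hdb, hdbb] at heq
      have hz : ∑ i, (ξ i - b i)^2 = 0 := by linarith
      funext i
      have := (Finset.sum_eq_zero_iff_of_nonneg (fun i _ => sq_nonneg (ξ i - b i))).mp hz i
        (Finset.mem_univ i)
      have := pow_eq_zero_iff (n := 2) (by norm_num) |>.mp this
      linarith [sub_eq_zero.mp this]
end

section
/- Let Q ∈ ℝ^{n×n} be symmetric positive definite, θ ∈ {0,1}^n, Θ = Diag(θ), and Σ = I_n − Θ. Then Q⁻¹ − Q⁻¹Θ(ΘQ⁻¹Θ)†ΘQ⁻¹ = (ΣQΣ)†; equivalently, the matrix P := Q⁻¹ − Q⁻¹Θ(ΘQ⁻¹Θ)†ΘQ⁻¹ satisfies the four Penrose equations for ΣQΣ, namely (ΣQΣ)P(ΣQΣ) = ΣQΣ, P(ΣQΣ)P = P, ((ΣQΣ)P)ᵀ = (ΣQΣ)P and (P(ΣQΣ))ᵀ = P(ΣQΣ). -/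
open Matrix

lemma conj_zero {n : ℕ} {R : Matrix (Fin n) (Fin n) ℝ} (hR : R.PosDef)
    (B : Matrix (Fin n) (Fin n) ℝ) (h : B * R * Bᵀ = 0) : B = 0 := by
  have key : ∀ i, B i = 0 := by
    intro i
    by_contra hi
    have hpos := hR.dotProduct_mulVec_pos hi
    have hzero : dotProduct (star (B i)) (R *ᵥ B i) = (B * R * Bᵀ) i i := by
      simp only [star_trivial, dotProduct, Matrix.mul_apply, Matrix.mulVec,
        Matrix.transpose_apply, Finset.sum_mul, Finset.mul_sum]
      rw [Finset.sum_comm]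
      apply Finset.sum_congr rfl; intro k _
      apply Finset.sum_congr rfl; intro l _
      ring
    rw [hzero, h] at hpos
    simp at hpos
  ext i j
  exact congrFun (key i) j

/-- `G` is the Moore–Penrose pseudoinverse of `M`, i.e. the four Penrose equations hold. -/
def IsMoorePenrose {n : ℕ} (M G : Matrix (Fin n) (Fin n) ℝ) : Prop :=
  M * G * M = M ∧ G * M * G = G ∧ (M * G)ᵀ = M * G ∧ (G * M)ᵀ = G * M

/-- **Proposition 3.** Let `Q` be symmetric positive definite, `θ ∈ {0,1}^n`,
`Θ = Diag(θ)` and `Σ = I − Θ`. Then `P := Q⁻¹ − Q⁻¹Θ(ΘQ⁻¹Θ)†ΘQ⁻¹ = (ΣQΣ)†`, i.e. `P`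
satisfies the four Penrose equations for `ΣQΣ`. -/
theorem pseudoinverse_formula {n : ℕ} (Q : Matrix (Fin n) (Fin n) ℝ) (hQ : Q.PosDef)
    (θ : Fin n → ℝ) (hθ : ∀ i, θ i = 0 ∨ θ i = 1)
    (G : Matrix (Fin n) (Fin n) ℝ)
    (hG : IsMoorePenrose (Matrix.diagonal θ * Q⁻¹ * Matrix.diagonal θ) G) :
    IsMoorePenrose ((1 - Matrix.diagonal θ) * Q * (1 - Matrix.diagonal θ))
      (Q⁻¹ - Q⁻¹ * Matrix.diagonal θ * G * Matrix.diagonal θ * Q⁻¹) := by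
  obtain ⟨h1, h2, h3, h4⟩ := hG
  set Θ : Matrix (Fin n) (Fin n) ℝ := Matrix.diagonal θ with hΘdef
  set A : Matrix (Fin n) (Fin n) ℝ := Θ * Q⁻¹ * Θ with hAdef
  -- basic facts
  have hθθ : (fun i => θ i * θ i) = θ := by
    funext i; rcases hθ i with h | h <;> simp [h]
  have hΘΘ : Θ * Θ = Θ := by
    rw [hΘdef, Matrix.diagonal_mul_diagonal]
    exact congrArg Matrix.diagonal hθθ
  have hΘT : Θᵀ = Θ := Matrix.diagonal_transpose θ
  have hQipd : Q⁻¹.PosDef := hQ.inv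
  have hQQi : Q * Q⁻¹ = 1 :=
    Matrix.mul_nonsing_inv Q ((Matrix.isUnit_iff_isUnit_det Q).mp hQ.isUnit)
  have hQiQ : Q⁻¹ * Q = 1 :=
    Matrix.nonsing_inv_mul Q ((Matrix.isUnit_iff_isUnit_det Q).mp hQ.isUnit)
  have hQT : Qᵀ = Q := by
    rw [← Matrix.conjTranspose_eq_transpose_of_trivial]; exact hQ.1
  have hQiT : Q⁻¹ᵀ = Q⁻¹ := by rw [Matrix.transpose_nonsing_inv, hQT]
  have hAT : Aᵀ = A := by
    rw [hAdef, Matrix.transpose_mul, Matrix.transpose_mul, hΘT, hQiT, ← mul_assoc]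
  have hAΘ : A * Θ = A := by rw [hAdef, mul_assoc, mul_assoc, hΘΘ, ← mul_assoc]
  have hΘA : Θ * A = A := by rw [hAdef, ← mul_assoc, ← mul_assoc, hΘΘ]
  have e1 : A * G = Gᵀ * A := by rw [← h3, Matrix.transpose_mul, hAT]
  have e2 : G * A = A * Gᵀ := by rw [← h4, Matrix.transpose_mul, hAT]
  -- G absorbs Θ
  have hGΘ : G * Θ = G := by
    calc G * Θ = (G * (A * G)) * Θ := by rw [← mul_assoc, h2]
    _ = (G * (Gᵀ * A)) * Θ := by rw [e1]
    _ = G * Gᵀ * (A * Θ) := by rw [← mul_assoc, mul_assoc]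
    _ = G * (Gᵀ * A) := by rw [hAΘ, mul_assoc]
    _ = G * (A * G) := by rw [← e1]
    _ = G := by rw [← mul_assoc, h2]
  have hΘG : Θ * G = G := by
    calc Θ * G = Θ * (G * A * G) := by rw [h2]
    _ = Θ * (A * Gᵀ * G) := by rw [e2]
    _ = (Θ * A) * (Gᵀ * G) := by rw [mul_assoc, ← mul_assoc, ← mul_assoc, mul_assoc (Θ * A)]
    _ = A * Gᵀ * G := by rw [hΘA, ← mul_assoc]
    _ = G * A * G := by rw [← e2]
    _ = G := h2
  -- A * G = Θ
  have hΘN : Θ * (Θ - A * G) = Θ - A * G := by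
    rw [mul_sub, hΘΘ, ← mul_assoc, hΘA]
  have hNQiΘ : (Θ - A * G) * (Q⁻¹ * Θ) = 0 := by
    have hGQiΘ : G * (Q⁻¹ * Θ) = G * A := by
      conv_lhs => rw [← hGΘ]
      rw [hAdef]; simp only [mul_assoc]
    rw [sub_mul, mul_assoc A G, hGQiΘ, ← mul_assoc A G A, h1,
      ← mul_assoc, ← hAdef, sub_self]
  have hNT : (Θ - A * G)ᵀ = Θ - A * G := by rw [Matrix.transpose_sub, hΘT, h3]
  have hAG : A * G = Θ := by
    have h0 : (Θ - A * G) * Q⁻¹ * (Θ - A * G)ᵀ = 0 := by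
      rw [hNT]
      calc (Θ - A * G) * Q⁻¹ * (Θ - A * G)
          = (Θ - A * G) * Q⁻¹ * (Θ * (Θ - A * G)) := by rw [hΘN]
        _ = ((Θ - A * G) * (Q⁻¹ * Θ)) * (Θ - A * G) := by
            simp only [mul_assoc]
        _ = 0 := by rw [hNQiΘ, zero_mul]
    have h5 := conj_zero hQipd _ h0
    have := sub_eq_zero.mp h5
    exact this.symm
  -- G * A = Θ
  have hGA : G * A = Θ := by
    have hNΘ : (Θ - G * A) * Θ = Θ - G * A := by
      rw [sub_mul, hΘΘ, mul_assoc, hAΘ]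
    have t1 : Θ * (G * A) = G * A := by rw [← mul_assoc, hΘG]
    have hΘQiN : Θ * (Q⁻¹ * (Θ - G * A)) = 0 := by
      calc Θ * (Q⁻¹ * (Θ - G * A))
          = Θ * (Q⁻¹ * Θ) - Θ * (Q⁻¹ * (Θ * (G * A))) := by rw [mul_sub, mul_sub, t1]
        _ = Θ * Q⁻¹ * Θ - (Θ * Q⁻¹ * Θ) * G * A := by simp only [mul_assoc]
        _ = A - A := by rw [← hAdef, h1]
        _ = 0 := sub_self A
    have hNT : (Θ - G * A)ᵀ = Θ - G * A := by rw [Matrix.transpose_sub, hΘT, h4]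
    have h0 : (Θ - G * A) * Q⁻¹ * (Θ - G * A)ᵀ = 0 := by
      rw [hNT]
      calc (Θ - G * A) * Q⁻¹ * (Θ - G * A)
          = ((Θ - G * A) * Θ) * Q⁻¹ * (Θ - G * A) := by rw [hNΘ]
        _ = (Θ - G * A) * (Θ * (Q⁻¹ * (Θ - G * A))) := by simp only [mul_assoc]
        _ = 0 := by rw [hΘQiN, mul_zero]
    exact (sub_eq_zero.mp (conj_zero hQipd _ h0)).symm
  -- symmetric versions and absorption identities
  have hΘQiG : Θ * Q⁻¹ * G = Θ := by
    calc Θ * Q⁻¹ * G = (Θ * Q⁻¹) * (Θ * G) := by rw [hΘG]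
    _ = (Θ * Q⁻¹ * Θ) * G := by rw [← mul_assoc]
    _ = A * G := by rw [← hAdef]
    _ = Θ := hAG
  have hGQiΘ : G * Q⁻¹ * Θ = Θ := by
    calc G * Q⁻¹ * Θ = ((G * Θ) * Q⁻¹) * Θ := by rw [hGΘ]
    _ = G * (Θ * Q⁻¹ * Θ) := by simp only [mul_assoc]
    _ = G * A := by rw [← hAdef]
    _ = Θ := hGA
  have hGQiG : G * Q⁻¹ * G = G := by
    calc G * Q⁻¹ * G = (G * Q⁻¹) * (Θ * G) := by rw [hΘG]
    _ = (G * Q⁻¹ * Θ) * G := by rw [← mul_assoc]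
    _ = Θ * G := by rw [hGQiΘ]
    _ = G := hΘG
  -- right-associated rewrite rules
  have r_tt : ∀ X : Matrix (Fin n) (Fin n) ℝ, Θ * (Θ * X) = Θ * X := fun X => by
    rw [← mul_assoc, hΘΘ]
  have r_qi : ∀ X : Matrix (Fin n) (Fin n) ℝ, Q * (Q⁻¹ * X) = X := fun X => by
    rw [← mul_assoc, hQQi, one_mul]
  have r_iq : ∀ X : Matrix (Fin n) (Fin n) ℝ, Q⁻¹ * (Q * X) = X := fun X => by
    rw [← mul_assoc, hQiQ, one_mul]
  have r_tg : ∀ X : Matrix (Fin n) (Fin n) ℝ, Θ * (G * X) = G * X := fun X => by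
    rw [← mul_assoc, hΘG]
  have r_gt : ∀ X : Matrix (Fin n) (Fin n) ℝ, G * (Θ * X) = G * X := fun X => by
    rw [← mul_assoc, hGΘ]
  have r_tig : ∀ X : Matrix (Fin n) (Fin n) ℝ, Θ * (Q⁻¹ * (G * X)) = Θ * X := fun X => by
    calc Θ * (Q⁻¹ * (G * X)) = (Θ * Q⁻¹ * G) * X := by simp only [mul_assoc]
    _ = Θ * X := by rw [hΘQiG]
  have r_git : ∀ X : Matrix (Fin n) (Fin n) ℝ, G * (Q⁻¹ * (Θ * X)) = Θ * X := fun X => by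
    calc G * (Q⁻¹ * (Θ * X)) = (G * Q⁻¹ * Θ) * X := by simp only [mul_assoc]
    _ = Θ * X := by rw [hGQiΘ]
  have r_gig : ∀ X : Matrix (Fin n) (Fin n) ℝ, G * (Q⁻¹ * (G * X)) = G * X := fun X => by
    calc G * (Q⁻¹ * (G * X)) = (G * Q⁻¹ * G) * X := by simp only [mul_assoc]
    _ = G * X := by rw [hGQiG]
  have r_tig' : Θ * (Q⁻¹ * G) = Θ := by rw [← mul_assoc, hΘQiG]
  have r_git' : G * (Q⁻¹ * Θ) = Θ := by rw [← mul_assoc, hGQiΘ]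
  have r_gig' : G * (Q⁻¹ * G) = G := by rw [← mul_assoc, hGQiG]
  -- the key products
  have hMP : ((1 - Θ) * Q * (1 - Θ)) * (Q⁻¹ - Q⁻¹ * Θ * G * Θ * Q⁻¹) = 1 - Θ := by
    simp only [sub_mul, mul_sub, mul_one, one_mul, mul_assoc, r_tt, r_qi, r_iq, r_tg, r_gt,
      r_tig, r_git, r_gig, r_tig', r_git', r_gig', hΘΘ, hQQi, hQiQ, hΘG, hGΘ]
    abel
  have hPM : (Q⁻¹ - Q⁻¹ * Θ * G * Θ * Q⁻¹) * ((1 - Θ) * Q * (1 - Θ)) = 1 - Θ := by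
    simp only [sub_mul, mul_sub, mul_one, one_mul, mul_assoc, r_tt, r_qi, r_iq, r_tg, r_gt,
      r_tig, r_git, r_gig, r_tig', r_git', r_gig', hΘΘ, hQQi, hQiQ, hΘG, hGΘ]
    abel
  have hS2 : (1 - Θ) * (1 - Θ) = 1 - Θ := by
    rw [sub_mul, one_mul, mul_sub, mul_one, hΘΘ, sub_self, sub_zero]
  have hSP : (1 - Θ) * (Q⁻¹ - Q⁻¹ * Θ * G * Θ * Q⁻¹) = Q⁻¹ - Q⁻¹ * Θ * G * Θ * Q⁻¹ := by
    simp only [sub_mul, mul_sub, mul_one, one_mul, mul_assoc, r_tt, r_qi, r_iq, r_tg, r_gt,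
      r_tig, r_git, r_gig, r_tig', r_git', r_gig', hΘΘ, hQQi, hQiQ, hΘG, hGΘ]
    abel
  refine ⟨?_, ?_, ?_, ?_⟩
  · rw [hMP, ← mul_assoc, ← mul_assoc, hS2]
  · rw [hPM, hSP]
  · rw [hMP, Matrix.transpose_sub, Matrix.transpose_one, hΘT]
  · rw [hPM, Matrix.transpose_sub, Matrix.transpose_one, hΘT]
end

section
/- Let n ≥ 2, λ₂ ≥ 0 and v ∈ ℝ^n, and let z* := z_{λ₂}(Bv). Then v − Bᵀz* is the unique minimizer of x ↦ λ₂‖Bx‖₁ + (1/2)‖x − v‖² over ℝ^n; that is, x_{λ₂}(v) = v − Bᵀ z_{λ₂}(Bv). -/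
open Matrix
lemma l2sq {m : ℕ} (w : Fin m → ℝ) : (l2norm w)^2 = ∑ i, (w i)^2 :=
  Real.sq_sqrt (Finset.sum_nonneg fun _ _ => sq_nonneg _)

lemma sum_sq_expand {m : ℕ} (a b : Fin m → ℝ) (t : ℝ) :
    ∑ i, (a i + t * b i)^2 =
      ∑ i, (a i)^2 + 2*t*(∑ i, a i * b i) + t^2 * ∑ i, (b i)^2 := by
  have h : ∀ i, (a i + t * b i)^2 = (a i)^2 + 2*t*(a i * b i) + t^2 * (b i)^2 :=
    fun i => by ring
  simp_rw [h, Finset.sum_add_distrib, ← Finset.mul_sum]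

lemma adj {k m : ℕ} (M : Matrix (Fin k) (Fin m) ℝ) (z : Fin k → ℝ) (x : Fin m → ℝ) :
    dot x (Mᵀ.mulVec z) = dot z (M.mulVec x) := by
  simp only [dot, Matrix.mulVec, dotProduct, Matrix.transpose_apply, Finset.mul_sum]
  rw [Finset.sum_comm]
  exact Finset.sum_congr rfl fun i _ => Finset.sum_congr rfl fun l _ => by ring

/-- **Lemma 1.**  `x_{λ₂}(v) = v − Bᵀ z_{λ₂}(Bv)`: if `z*` minimizes
`z ↦ (1/2)‖Bᵀz‖² − ⟨z, Bv⟩` over `{‖z‖_∞ ≤ λ₂}`, then `v − Bᵀz*` is the unique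
minimizer of `x ↦ λ₂‖Bx‖₁ + (1/2)‖x − v‖²`. -/
theorem tv_prox_dual {n : ℕ} (hn : 2 ≤ n) (lam2 : ℝ) (hlam2 : 0 ≤ lam2)
    (B : Matrix (Fin (n - 1)) (Fin n) ℝ)
    (hB : ∀ (i : Fin (n - 1)) (l : Fin n),
      B i l = if (l : ℕ) = (i : ℕ) then 1 else if (l : ℕ) = (i : ℕ) + 1 then -1 else 0)
    (v : Fin n → ℝ) (zstar : Fin (n - 1) → ℝ)
    (hfeas : ∀ i, |zstar i| ≤ lam2)
    (hmin : ∀ z : Fin (n - 1) → ℝ, (∀ i, |z i| ≤ lam2) →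
      (1/2) * (l2norm (Bᵀ.mulVec zstar))^2 - dot zstar (B.mulVec v) ≤
      (1/2) * (l2norm (Bᵀ.mulVec z))^2 - dot z (B.mulVec v)) :
    (∀ x : Fin n → ℝ,
      lam2 * (∑ i, |B.mulVec (v - Bᵀ.mulVec zstar) i|) +
        (1/2) * (l2norm ((v - Bᵀ.mulVec zstar) - v))^2 ≤
      lam2 * (∑ i, |B.mulVec x i|) + (1/2) * (l2norm (x - v))^2) ∧
    (∀ x : Fin n → ℝ,
      (∀ y : Fin n → ℝ,
        lam2 * (∑ i, |B.mulVec x i|) + (1/2) * (l2norm (x - v))^2 ≤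
        lam2 * (∑ i, |B.mulVec y i|) + (1/2) * (l2norm (y - v))^2) →
      x = v - Bᵀ.mulVec zstar) := by
  classical
  set xs : Fin n → ℝ := v - Bᵀ.mulVec zstar with hxs
  set w : Fin (n - 1) → ℝ := B.mulVec xs with hw
  -- upper bound: ⟨z, u⟩ ≤ lam2 * ∑ |u|, coordinatewise
  have upper : ∀ (z : Fin (n-1) → ℝ), (∀ i, |z i| ≤ lam2) →
      ∀ (u : Fin (n-1) → ℝ) (i : Fin (n-1)), z i * u i ≤ lam2 * |u i| := by
    intro z hz u i
    calc z i * u i ≤ |z i * u i| := le_abs_self _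
      _ = |z i| * |u i| := abs_mul _ _
      _ ≤ lam2 * |u i| := mul_le_mul_of_nonneg_right (hz i) (abs_nonneg _)
  -- complementarity
  have comp : ∀ i, zstar i * w i = lam2 * |w i| := by
    intro i
    set s : ℝ := if 0 ≤ w i then lam2 else -lam2 with hs
    have hsw : s * w i = lam2 * |w i| := by
      rcases le_or_gt 0 (w i) with h | h
      · simp [hs, h, abs_of_nonneg h]
      · simp only [hs, not_le.mpr h, if_false, abs_of_neg h]; ring
    have hsabs : |s| ≤ lam2 := by
      rcases le_or_gt 0 (w i) with h | h
      · simp [hs, h, abs_of_nonneg hlam2]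
      · simp [hs, not_le.mpr h, abs_of_nonneg hlam2]
    set d : Fin (n - 1) → ℝ := fun j => if j = i then s - zstar i else 0 with hd
    set bb : Fin n → ℝ := Bᵀ.mulVec d with hbb
    set A : ℝ := -((s - zstar i) * w i) with hA
    set bq : ℝ := (1/2) * ∑ l, (bb l)^2 with hbq
    have hbqnn : 0 ≤ bq := by
      rw [hbq]; positivity
    have key : ∀ t : ℝ, 0 ≤ t → t ≤ 1 → 0 ≤ t * A + t^2 * bq := by
      intro t ht0 ht1
      have hfz : ∀ j, |zstar j + t * d j| ≤ lam2 := by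
        intro j
        by_cases hj : j = i
        · subst hj
          have he : zstar j + t * d j = (1-t) * zstar j + t * s := by
            simp only [hd, if_pos rfl]; ring
          rw [he]
          calc |(1-t)*zstar j + t*s| ≤ |(1-t)*zstar j| + |t*s| := abs_add_le _ _
            _ = (1-t)*|zstar j| + t*|s| := by
                rw [abs_mul, abs_mul, abs_of_nonneg (by linarith : (0:ℝ) ≤ 1 - t),
                  abs_of_nonneg ht0]
            _ ≤ (1-t)*lam2 + t*lam2 := by
                have h1 := hfeas j
                have h2 : (0:ℝ) ≤ 1 - t := by linarith
                nlinarith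
            _ = lam2 := by ring
        · simpa [hd, hj] using hfeas j
      have hm := hmin (fun j => zstar j + t * d j) hfz
      have hz : (fun j => zstar j + t * d j) = zstar + t • d := by
        funext j; simp
      rw [hz, l2sq, l2sq] at hm
      have hBzt : ∀ l, Bᵀ.mulVec (zstar + t • d) l = Bᵀ.mulVec zstar l + t * bb l := by
        intro l
        simp [Matrix.mulVec_add, Matrix.mulVec_smul, hbb]
      simp only [hBzt] at hm
      rw [sum_sq_expand] at hm
      have hdot : dot (zstar + t • d) (B.mulVec v)
          = dot zstar (B.mulVec v) + t * dot d (B.mulVec v) := by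
        simp only [dot, Pi.add_apply, Pi.smul_apply, smul_eq_mul, Finset.mul_sum,
          ← Finset.sum_add_distrib]
        exact Finset.sum_congr rfl fun j _ => by ring
      rw [hdot] at hm
      have hAeq : (∑ l, Bᵀ.mulVec zstar l * bb l) - dot d (B.mulVec v) = A := by
        have h1 : ∑ l, Bᵀ.mulVec zstar l * bb l = dot d (B.mulVec (Bᵀ.mulVec zstar)) := by
          rw [hbb]
          exact adj B d (Bᵀ.mulVec zstar)
        have h2 : dot d (B.mulVec (Bᵀ.mulVec zstar)) - dot d (B.mulVec v) = - dot d w := by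
          rw [hw, hxs, Matrix.mulVec_sub]
          simp only [dot, Pi.sub_apply]
          rw [← Finset.sum_sub_distrib, ← Finset.sum_neg_distrib]
          exact Finset.sum_congr rfl fun j _ => by ring
        have h3 : dot d w = (s - zstar i) * w i := by
          simp only [dot, hd, ite_mul, zero_mul]
          rw [Finset.sum_ite_eq' Finset.univ i (fun j => (s - zstar i) * w j)]
          simp
        rw [h1, h2, h3, hA]
      nlinarith [hm, hAeq]
    -- from key: 0 ≤ A
    have hAnn : 0 ≤ A := by
      by_contra hAneg
      push_neg at hAneg
      obtain ⟨t, ht0, ht1, htneg⟩ : ∃ t : ℝ, 0 < t ∧ t ≤ 1 ∧ A + t * bq < 0 := by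
        rcases eq_or_lt_of_le hbqnn with h | h
        · exact ⟨1, one_pos, le_refl 1, by rw [← h]; simpa using hAneg⟩
        · refine ⟨min 1 (-A/(2*bq)), lt_min one_pos (div_pos (by linarith) (by linarith)), min_le_left _ _, ?_⟩
          have h1 : min 1 (-A/(2*bq)) * bq ≤ (-A/(2*bq)) * bq :=
            mul_le_mul_of_nonneg_right (min_le_right _ _) h.le
          have h2 : (-A/(2*bq)) * bq = -A/2 := by field_simp
          linarith
      have hk := key t ht0.le ht1
      nlinarith [mul_pos ht0 (show (0:ℝ) < -(A + t * bq) by linarith)]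
    have hle : lam2 * |w i| ≤ zstar i * w i := by
      rw [← hsw]; rw [hA] at hAnn; nlinarith
    exact le_antisymm (upper zstar hfeas w i) hle
  -- main inequality with strong-convexity remainder
  have main : ∀ x : Fin n → ℝ,
      lam2 * (∑ i, |w i|) + (1/2) * ∑ l, (xs l - v l)^2 + (1/2) * ∑ l, (x l - xs l)^2
        ≤ lam2 * (∑ i, |B.mulVec x i|) + (1/2) * ∑ l, (x l - v l)^2 := by
    intro x
    have hsplit : ∑ l, (x l - v l)^2
        = ∑ l, (x l - xs l)^2 + 2 * (∑ l, (x l - xs l) * (xs l - v l))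
          + ∑ l, (xs l - v l)^2 := by
      have h : ∀ l, (x l - v l)^2
          = (x l - xs l)^2 + 2 * ((x l - xs l) * (xs l - v l)) + (xs l - v l)^2 :=
        fun l => by ring
      simp_rw [h, Finset.sum_add_distrib, ← Finset.mul_sum]
    have hcross : ∑ l, (x l - xs l) * (xs l - v l)
        = -(dot zstar (B.mulVec x)) + lam2 * ∑ i, |w i| := by
      have h1 : ∑ l, (x l - xs l) * (xs l - v l)
          = - dot (x - xs) (Bᵀ.mulVec zstar) := by
        simp only [dot, Pi.sub_apply, hxs]
        rw [← Finset.sum_neg_distrib]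
        exact Finset.sum_congr rfl fun l _ => by ring
      rw [h1, adj]
      have h2 : dot zstar (B.mulVec (x - xs)) = dot zstar (B.mulVec x) - dot zstar w := by
        rw [hw, Matrix.mulVec_sub]
        simp only [dot, Pi.sub_apply]
        rw [← Finset.sum_sub_distrib]
        exact Finset.sum_congr rfl fun j _ => by ring
      have h3 : dot zstar w = lam2 * ∑ i, |w i| := by
        rw [dot, Finset.mul_sum]
        exact Finset.sum_congr rfl fun i _ => comp i
      rw [h2, h3]; ring
    have hbound : dot zstar (B.mulVec x) ≤ lam2 * ∑ i, |B.mulVec x i| := by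
      rw [dot, Finset.mul_sum]
      exact Finset.sum_le_sum fun i _ => upper zstar hfeas (B.mulVec x) i
    linarith [hsplit, hcross, hbound]
  have hconv : ∀ x : Fin n → ℝ, (l2norm (x - v))^2 = ∑ l, (x l - v l)^2 := by
    intro x; rw [l2sq]; exact Finset.sum_congr rfl fun l _ => by simp
  constructor
  · intro x
    have hm := main x
    have hnn : 0 ≤ (1/2) * ∑ l, (x l - xs l)^2 := by positivity
    rw [hconv xs, hconv x]
    linarith
  · intro x hx
    have h1 := hx xs
    rw [hconv xs, hconv x] at h1
    have h2 := main x
    have h3 : ∑ l, (x l - xs l)^2 ≤ 0 := by linarith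
    have h4 : ∀ l ∈ Finset.univ, (x l - xs l)^2 = 0 := by
      rw [← Finset.sum_eq_zero_iff_of_nonneg (fun l _ => sq_nonneg _)]
      exact le_antisymm h3 (Finset.sum_nonneg fun l _ => sq_nonneg _)
    funext l
    have := h4 l (Finset.mem_univ l)
    have := pow_eq_zero_iff (n := 2) (by norm_num) |>.mp this
    have hxl : x l = xs l := by linarith [sub_eq_zero.mp this]
    simpa [hxs] using hxl
end

section
/- Let n ≥ 2, λ₂ ≥ 0 and v ∈ ℝ^n. Let z* := z_{λ₂}(Bv) and x* := v − Bᵀz* (so x* = x_{λ₂}(v)). Then for every i ∈ {1,…,n−1}, |z*_i| < λ₂ implies (Bx*)_i = 0; that is, the support of B x_{λ₂}(v) is contained in the active index set I_z(v) := {i : |(z_{λ₂}(Bv))_i| = λ₂}. -/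
open Matrix

/-- The support of `B x_{λ₂}(v)` is contained in the active set
`I_z(v) = {i : |(z_{λ₂}(Bv))_i| = λ₂}`: with `z*` the minimizer of the dual problem and
`x* := v − Bᵀz*`, if `|z*_i| < λ₂` then `(Bx*)_i = 0`. -/
theorem support_subset_active {n : ℕ} (hn : 2 ≤ n) (lam2 : ℝ) (hlam2 : 0 ≤ lam2)
    (B : Matrix (Fin (n - 1)) (Fin n) ℝ)
    (hB : ∀ (i : Fin (n - 1)) (l : Fin n),
      B i l = if (l : ℕ) = (i : ℕ) then 1 else if (l : ℕ) = (i : ℕ) + 1 then -1 else 0)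
    (v : Fin n → ℝ) (zstar : Fin (n - 1) → ℝ)
    (hfeas : ∀ i, |zstar i| ≤ lam2)
    (hmin : ∀ z : Fin (n - 1) → ℝ, (∀ i, |z i| ≤ lam2) →
      (1/2) * (l2norm (Bᵀ.mulVec zstar))^2 - dot zstar (B.mulVec v) ≤
      (1/2) * (l2norm (Bᵀ.mulVec z))^2 - dot z (B.mulVec v)) :
    ∀ i : Fin (n - 1), |zstar i| < lam2 → B.mulVec (v - Bᵀ.mulVec zstar) i = 0 := by
  intro i hi
  -- abbreviations
  set u : Fin (n-1) → ℝ := B.mulVec v with hu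
  set w : Fin n → ℝ := Bᵀ.mulVec zstar with hw
  set b : Fin n → ℝ := fun l => B i l with hbdef
  set g : ℝ := (∑ l, w l * b l) - u i with hg
  -- the target equals -g
  have key : B.mulVec (v - Bᵀ.mulVec zstar) i = -g := by
    simp only [hg, hu, hw, hbdef, Matrix.mulVec, dotProduct, Pi.sub_apply, mul_sub]
    rw [Finset.sum_sub_distrib, neg_sub]
    congr 1
    exact Finset.sum_congr rfl fun l _ => mul_comm _ _
  -- squared l2 norm is sum of squares
  have sqnorm : ∀ y : Fin n → ℝ, (l2norm y)^2 = ∑ l, (y l)^2 := by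
    intro y
    exact Real.sq_sqrt (Finset.sum_nonneg fun l _ => sq_nonneg _)
  -- sum of squares of row i of B is 2
  have hi0 : (i : ℕ) < n := by omega
  have hi1 : (i : ℕ) + 1 < n := by have := i.isLt; omega
  set i0 : Fin n := ⟨i, hi0⟩
  set i1 : Fin n := ⟨(i : ℕ) + 1, hi1⟩
  have hne : i0 ≠ i1 := by
    intro h; have := congrArg Fin.val h; simp [i0, i1] at this
  have hbsq : (∑ l, (b l)^2) = 2 := by
    have hpt : ∀ l, (b l)^2 = (if l = i0 then (1:ℝ) else 0) + (if l = i1 then 1 else 0) := by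
      intro l
      by_cases h0 : l = i0
      · subst h0
        simp [hbdef, hB, i0, if_neg (by omega : ¬ ((i:ℕ) = (i:ℕ)+1)), hne]
      · by_cases h1 : l = i1
        · subst h1
          have : ¬ ((i:ℕ)+1 = (i:ℕ)) := by omega
          simp [hbdef, hB, i1, this, Ne.symm hne]
        · have h0' : (l:ℕ) ≠ (i:ℕ) := fun h => h0 (Fin.ext h)
          have h1' : (l:ℕ) ≠ (i:ℕ)+1 := fun h => h1 (Fin.ext h)
          simp [hbdef, hB, h0', h1', h0, h1]
    simp only [hpt]
    rw [Finset.sum_add_distrib, Finset.sum_ite_eq' Finset.univ i0 (fun _ => (1:ℝ)),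
      Finset.sum_ite_eq' Finset.univ i1 (fun _ => (1:ℝ))]
    norm_num
  -- key inequality for perturbations
  have hkey : ∀ t : ℝ, |zstar i + t| ≤ lam2 → 0 ≤ t * g + t^2 := by
    intro t ht
    set z' : Fin (n-1) → ℝ := fun j => zstar j + if j = i then t else 0 with hz'
    have hfeas' : ∀ j, |z' j| ≤ lam2 := by
      intro j
      by_cases h : j = i
      · subst h; simpa [hz'] using ht
      · simpa [hz', h] using hfeas j
    have hBz' : Bᵀ.mulVec z' = fun l => w l + t * b l := by
      funext l
      simp only [hw, hbdef, Matrix.mulVec, dotProduct, Matrix.transpose_apply, hz']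
      rw [show (∑ j, B j l * (zstar j + if j = i then t else 0)) =
          (∑ j, B j l * zstar j) + ∑ j, (if j = i then B j l * t else 0) by
        rw [← Finset.sum_add_distrib]; congr 1; funext j; by_cases h : j = i <;> simp [h] <;> ring]
      rw [Finset.sum_ite_eq' Finset.univ i (fun j => B j l * t)]
      simp [mul_comm]
    have hdot : dot z' u = dot zstar u + t * u i := by
      simp only [dot, hz']
      rw [show (∑ j, (zstar j + if j = i then t else 0) * u j) =
          (∑ j, zstar j * u j) + ∑ j, (if j = i then t * u j else 0) by
        rw [← Finset.sum_add_distrib]; congr 1; funext j; by_cases h : j = i <;> simp [h] <;> ring]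
      rw [Finset.sum_ite_eq' Finset.univ i (fun j => t * u j)]
      simp
    have hexp : (∑ l, (w l + t * b l)^2) =
        (∑ l, (w l)^2) + 2 * t * (∑ l, w l * b l) + t^2 * (∑ l, (b l)^2) := by
      rw [Finset.mul_sum, Finset.mul_sum, ← Finset.sum_add_distrib, ← Finset.sum_add_distrib]
      congr 1; funext l; ring
    have := hmin z' hfeas'
    rw [hBz', sqnorm, sqnorm, hexp, hbsq, hdot] at this
    have hwz : (l2norm w)^2 = ∑ l, (w l)^2 := sqnorm w
    simp only [hg, hu, hw] at *
    nlinarith [this]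
  -- conclude g = 0
  have hg0 : g = 0 := by
    by_contra hgne
    set d : ℝ := lam2 - |zstar i| with hd
    have hdpos : 0 < d := by simp [hd]; linarith
    set δ : ℝ := min (|g|/2) d with hδ
    have hδpos : 0 < δ := lt_min (by positivity) hdpos
    have hδle : δ ≤ |g|/2 := min_le_left _ _
    have hδd : δ ≤ d := min_le_right _ _
    set t : ℝ := if 0 < g then -δ else δ with htdef
    have htabs : |t| = δ := by
      by_cases h : 0 < g <;> simp [htdef, h, abs_of_pos hδpos]
    have hfeast : |zstar i + t| ≤ lam2 := by
      calc |zstar i + t| ≤ |zstar i| + |t| := abs_add_le _ _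
        _ = |zstar i| + δ := by rw [htabs]
        _ ≤ |zstar i| + d := by linarith
        _ = lam2 := by simp [hd]
    have h1 := hkey t hfeast
    have htg : t * g = -(δ * |g|) := by
      by_cases h : 0 < g
      · rw [htdef, if_pos h, abs_of_pos h]; ring
      · rw [htdef, if_neg h, abs_of_nonpos (le_of_not_gt h)]; ring
    have ht2 : t^2 = δ^2 := by
      by_cases h : 0 < g <;> simp [htdef, h] <;> ring
    rw [htg, ht2] at h1
    have hgpos : 0 < |g| := abs_pos.mpr hgne
    nlinarith
  rw [key, hg0, neg_zero]
end

section
/- In the alternating block setting, let θ ∈ {0,1}^n be such that for each j ∈ J, θ is constant on the index range {n₁+⋯+n_{j−1}+1, …, n₁+⋯+n_j+1} (the rows of the block Γ_j), and set Θ = Diag(θ). Then the matrix ΘΓ is symmetric and positive semidefinite. -/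
open Matrix

/-- Cumulative block sizes: `cumS nb j = n₁ + ⋯ + n_j` (`0`-indexed: sum of `nb t` for `t < j`). -/
def cumS {N : ℕ} (nb : Fin N → ℕ) (j : ℕ) : ℕ :=
  ∑ t : Fin N, if (t : ℕ) < j then nb t else 0

/-- The block diagonal matrix `Γ = Diag(Γ₁,…,Γ_N)` of Proposition 6, written entrywise:
on the (row/column) range `[cumS j, cumS (j+1)]` of a block `j ∈ J` it is the all-ones
block scaled by `1/(n_j+1)`; outside the `J`-ranges it is the identity. -/
noncomputable def GammaMat {N : ℕ} (nn : ℕ) (nb : Fin N → ℕ) (J : Finset (Fin N)) :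
    Matrix (Fin nn) (Fin nn) ℝ :=
  Matrix.of fun k l =>
    (if k = l ∧ ∀ j ∈ J, ¬(cumS nb (j : ℕ) ≤ (k : ℕ) ∧ (k : ℕ) ≤ cumS nb ((j : ℕ) + 1))
      then (1 : ℝ) else 0)
    + ∑ j ∈ J,
        if (cumS nb (j : ℕ) ≤ (k : ℕ) ∧ (k : ℕ) ≤ cumS nb ((j : ℕ) + 1)) ∧
           (cumS nb (j : ℕ) ≤ (l : ℕ) ∧ (l : ℕ) ≤ cumS nb ((j : ℕ) + 1))
        then (1 : ℝ) / ((nb j : ℝ) + 1) else 0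

/-- A scaled rank-one matrix `c · u uᵀ` entrywise. -/
noncomputable def rankOne {m : ℕ} (c : ℝ) (u : Fin m → ℝ) : Matrix (Fin m) (Fin m) ℝ :=
  Matrix.of fun k l => c * u k * u l

lemma rankOne_posSemidef {m : ℕ} (c : ℝ) (hc : 0 ≤ c) (u : Fin m → ℝ) :
    (rankOne c u).PosSemidef := by
  refine Matrix.PosSemidef.of_dotProduct_mulVec_nonneg ?_ ?_
  · ext k l
    simp [rankOne, Matrix.conjTranspose_apply]
    ring
  · intro x
    have key : ∀ k : Fin m, x k * (∑ l, c * u k * u l * x l)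
        = (u k * x k) * (c * ∑ l, u l * x l) := by
      intro k
      rw [Finset.mul_sum, Finset.mul_sum, Finset.mul_sum]
      exact Finset.sum_congr rfl fun l _ => by ring
    have goalEq : dotProduct (star x) ((rankOne c u) *ᵥ x)
        = (∑ k, u k * x k) * (c * ∑ l, u l * x l) := by
      simp only [dotProduct, Matrix.mulVec, rankOne, Matrix.of_apply, star_trivial]
      calc ∑ k, x k * ∑ l, c * u k * u l * x l
          = ∑ k, (u k * x k) * (c * ∑ l, u l * x l) :=
            Finset.sum_congr rfl (fun k _ => key k)
        _ = (∑ k, u k * x k) * (c * ∑ l, u l * x l) := by rw [Finset.sum_mul]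
    rw [goalEq]
    have h2 : (∑ k, u k * x k) * (c * ∑ l, u l * x l)
        = c * ((∑ k, u k * x k) * (∑ k, u k * x k)) := by ring
    rw [h2]
    exact mul_nonneg hc (mul_self_nonneg _)

lemma posSemidef_sum {m : ℕ} {ι : Type*} (s : Finset ι) (f : ι → Matrix (Fin m) (Fin m) ℝ)
    (hf : ∀ i ∈ s, (f i).PosSemidef) : (∑ i ∈ s, f i).PosSemidef := by
  classical
  induction s using Finset.induction_on with
  | empty => simpa using Matrix.PosSemidef.zero
  | insert a s hns ih =>
    rw [Finset.sum_insert hns]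
    exact (hf a (Finset.mem_insert_self a s)).add
      (ih fun i hi => hf i (Finset.mem_insert_of_mem hi))

lemma cumS_le_sum {N : ℕ} (nb : Fin N → ℕ) (j : ℕ) : cumS nb j ≤ ∑ t, nb t := by
  unfold cumS
  exact Finset.sum_le_sum fun t _ => by split <;> simp

lemma cumS_mono {N : ℕ} (nb : Fin N → ℕ) {j j' : ℕ} (h : j ≤ j') :
    cumS nb j ≤ cumS nb j' := by
  unfold cumS
  refine Finset.sum_le_sum fun t _ => ?_
  by_cases ht : (t : ℕ) < j
  · simp [ht, ht.trans_le h]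
  · simp [ht]

/-- **Theorem 1 (positive semidefiniteness).** In the alternating block setting, if
`θ ∈ {0,1}^n` is constant on the row range of each block `Γ_j` with `j ∈ J`, then
`Θ Γ` (with `Θ = Diag(θ)`) is symmetric positive semidefinite. -/
theorem theta_gamma_psd {nn N : ℕ} (hnn : 2 ≤ nn) (hN : 1 ≤ N)
    (nb : Fin N → ℕ) (hnb : ∀ t, 1 ≤ nb t) (hsum : (∑ t, nb t) = nn - 1)
    (J : Finset (Fin N)) (hJne : J.Nonempty)
    (halt : ∀ (i : Fin N) (h : (i : ℕ) + 1 < N), i ∈ J ↔ (⟨(i : ℕ) + 1, h⟩ : Fin N) ∉ J)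
    (θ : Fin nn → ℝ) (hθ : ∀ k, θ k = 0 ∨ θ k = 1)
    (hconst : ∀ j ∈ J, ∀ k l : Fin nn,
      (cumS nb (j : ℕ) ≤ (k : ℕ) ∧ (k : ℕ) ≤ cumS nb ((j : ℕ) + 1)) →
      (cumS nb (j : ℕ) ≤ (l : ℕ) ∧ (l : ℕ) ≤ cumS nb ((j : ℕ) + 1)) → θ k = θ l) :
    (Matrix.diagonal θ * GammaMat nn nb J).IsSymm ∧
    (Matrix.diagonal θ * GammaMat nn nb J).PosSemidef := by
  classical
  -- index bound for representatives
  have hrep : ∀ j : ℕ, cumS nb j < nn := by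
    intro j
    have h1 : cumS nb j ≤ nn - 1 := hsum ▸ cumS_le_sum nb j
    omega
  -- the representative of block j
  set rep : Fin N → Fin nn := fun j => ⟨cumS nb (j : ℕ), hrep _⟩ with hrepdef
  -- membership predicate
  set inR : Fin N → Fin nn → Prop := fun j k =>
    cumS nb (j : ℕ) ≤ (k : ℕ) ∧ (k : ℕ) ≤ cumS nb ((j : ℕ) + 1) with hinR
  have hrepin : ∀ j : Fin N, inR j (rep j) := by
    intro j
    exact ⟨le_refl _, cumS_mono nb (Nat.le_succ _)⟩
  -- nonnegativity of θ
  have hθ0 : ∀ k, 0 ≤ θ k := fun k => by rcases hθ k with h | h <;> simp [h]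
  -- decomposition
  have hdecomp : Matrix.diagonal θ * GammaMat nn nb J
      = Matrix.diagonal (fun k => θ k *
          (if ∀ j ∈ J, ¬ inR j k then (1 : ℝ) else 0))
        + ∑ j ∈ J, rankOne (θ (rep j) * (1 / ((nb j : ℝ) + 1)))
            (fun k => if inR j k then (1 : ℝ) else 0) := by
    ext k l
    rw [Matrix.mul_apply]
    have hd : ∀ i : Fin nn, Matrix.diagonal θ k i = if k = i then θ k else 0 := by
      intro i
      by_cases h : k = i
      · subst h; simp
      · simp [Matrix.diagonal_apply_ne _ h, h]
    simp only [hd]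
    have hsum1 : ∑ x : Fin nn, (if k = x then θ k else 0) * GammaMat nn nb J x l
        = θ k * GammaMat nn nb J k l := by
      rw [Finset.sum_eq_single k]
      · simp
      · intro b _ hb
        rw [if_neg (Ne.symm hb), zero_mul]
      · simp
    rw [hsum1]
    simp only [GammaMat, Matrix.of_apply, Matrix.add_apply, rankOne,
      Matrix.sum_apply, mul_add, hinR]
    congr 1
    · -- diagonal part
      by_cases hkl : k = l
      · subst hkl
        by_cases hP : ∀ j ∈ J, ¬(cumS nb (j : ℕ) ≤ (k : ℕ) ∧ (k : ℕ) ≤ cumS nb ((j : ℕ) + 1))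
        · rw [if_pos ⟨rfl, hP⟩, Matrix.diagonal_apply_eq, if_pos hP]
        · rw [if_neg (fun h => hP h.2), Matrix.diagonal_apply_eq, if_neg hP]
      · rw [if_neg (fun h => hkl h.1), Matrix.diagonal_apply_ne _ hkl]; ring
    · -- block parts
      rw [Finset.mul_sum]
      refine Finset.sum_congr rfl fun j hj => ?_
      by_cases hk : cumS nb (j : ℕ) ≤ (k : ℕ) ∧ (k : ℕ) ≤ cumS nb ((j : ℕ) + 1)
      · by_cases hl : cumS nb (j : ℕ) ≤ (l : ℕ) ∧ (l : ℕ) ≤ cumS nb ((j : ℕ) + 1)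
        · have hθk : θ k = θ (rep j) := hconst j hj k (rep j) hk (hrepin j)
          rw [if_pos ⟨hk, hl⟩, if_pos hk, if_pos hl, hθk]
          ring
        · rw [if_neg (fun h => hl h.2), if_neg hl]; ring
      · rw [if_neg (fun h => hk h.1), if_neg hk]; ring
  -- PSD of each summand
  have hpsd : (Matrix.diagonal θ * GammaMat nn nb J).PosSemidef := by
    rw [hdecomp]
    refine Matrix.PosSemidef.add (Matrix.PosSemidef.diagonal ?_) (posSemidef_sum _ _ ?_)
    · intro k
      refine mul_nonneg (hθ0 k) ?_
      split <;> norm_num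
    · intro j _
      refine rankOne_posSemidef _ (mul_nonneg (hθ0 _) ?_) _
      positivity
  refine ⟨?_, hpsd⟩
  have h := hpsd.isHermitian
  rw [Matrix.IsHermitian] at h
  rw [Matrix.IsSymm]
  simpa using h
end

section
/- Let Ω ⊆ ℝ^n be open, and let θ : Ω → ℝ be continuously differentiable with locally Lipschitz gradient ∇θ. Let K assign to each point of Ω a nonempty compact set of symmetric n×n real matrices, and suppose K is upper semicontinuous (for every y ∈ Ω and every open set U of matrices with K(y) ⊆ U there is δ > 0 such that K(y') ⊆ U whenever ‖y' − y‖ < δ). Suppose ∇θ is semismooth at x ∈ Ω with respect to K, i.e., ∇θ is directionally differentiable at x and for every ε > 0 there is δ > 0 such that ‖∇θ(x+d) − ∇θ(x) − Vd‖ ≤ ε‖d‖ for all d with 0 < ‖d‖ < δ and all V ∈ K(x+d). Then for every ε > 0 there is δ > 0 such that |θ(x+d) − θ(x) − ⟨∇θ(x), d⟩ − (1/2)⟨d, Vd⟩| ≤ ε‖d‖² for all d with 0 < ‖d‖ < δ and all V ∈ K(x+d). -/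
open Matrix

namespace SOE
variable {n : ℕ}

noncomputable def toE (v : Fin n → ℝ) : EuclideanSpace ℝ (Fin n) := WithLp.toLp 2 v
lemma toE_apply (v : Fin n → ℝ) (i : Fin n) : toE v i = v i := rfl
lemma l2_eq (v : Fin n → ℝ) : l2norm v = ‖toE v‖ := by
  rw [EuclideanSpace.norm_eq]; simp [l2norm, toE_apply, sq_abs]
lemma dot_eq (u v : Fin n → ℝ) : dot u v = inner ℝ (toE u) (toE v) := by
  simp [dot, PiLp.inner_apply, RCLike.inner_apply, toE_apply, mul_comm]

lemma l2_nonneg (v : Fin n → ℝ) : 0 ≤ l2norm v := Real.sqrt_nonneg _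
lemma l2_zero : l2norm (0 : Fin n → ℝ) = 0 := by rw [l2_eq]; exact norm_zero
lemma l2_smul (c : ℝ) (v : Fin n → ℝ) : l2norm (c • v) = |c| * l2norm v := by
  rw [l2_eq, l2_eq, show toE (c • v) = c • toE v from rfl, norm_smul, Real.norm_eq_abs]
lemma l2_neg (v : Fin n → ℝ) : l2norm (-v) = l2norm v := by
  rw [l2_eq, l2_eq, show toE (-v) = -toE v from rfl, norm_neg]
lemma l2_sub_rev (a b : Fin n → ℝ) : l2norm (a - b) = l2norm (b - a) := by
  rw [← l2_neg (a - b), neg_sub]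
lemma l2_add_le (a b : Fin n → ℝ) : l2norm (a + b) ≤ l2norm a + l2norm b := by
  rw [l2_eq, l2_eq, l2_eq, show toE (a + b) = toE a + toE b from rfl]; exact norm_add_le _ _
lemma l2_add3_le (a b c : Fin n → ℝ) :
    l2norm (a + b + c) ≤ l2norm a + l2norm b + l2norm c :=
  le_trans (l2_add_le _ _) (by linarith [l2_add_le a b])
lemma abs_dot_le (u v : Fin n → ℝ) : |dot u v| ≤ l2norm u * l2norm v := by
  rw [dot_eq, l2_eq, l2_eq]; exact abs_real_inner_le_norm _ _
lemma sup_le_l2 (v : Fin n → ℝ) : ‖v‖ ≤ l2norm v := by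
  refine pi_norm_le_iff_of_nonneg (l2_nonneg v) |>.mpr (fun i => ?_)
  rw [Real.norm_eq_abs, ← Real.sqrt_sq_eq_abs]
  exact Real.sqrt_le_sqrt (Finset.single_le_sum (f := fun i => (v i)^2)
    (fun i _ => sq_nonneg _) (Finset.mem_univ i))
lemma l2_le_sup (v : Fin n → ℝ) : l2norm v ≤ Real.sqrt n * ‖v‖ := by
  rw [← Real.sqrt_sq (norm_nonneg v), ← Real.sqrt_mul (by positivity)]
  refine Real.sqrt_le_sqrt ?_
  calc ∑ i, (v i)^2 ≤ ∑ _i : Fin n, ‖v‖^2 := by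
        refine Finset.sum_le_sum (fun i _ => ?_)
        have := norm_le_pi_norm v i
        rw [← sq_abs]
        exact pow_le_pow_left₀ (abs_nonneg _) (le_trans (le_of_eq (Real.norm_eq_abs _).symm) this) 2
    _ = n * ‖v‖^2 := by simp [Finset.sum_const]
lemma l2_continuous : Continuous (l2norm (m := n)) := by
  unfold l2norm; fun_prop
lemma l2_pos {v : Fin n → ℝ} (h : v ≠ 0) : 0 < l2norm v := by
  rw [l2_eq]; exact norm_pos_iff.mpr (fun hh => h (congrArg WithLp.ofLp hh))

lemma dot_comm (u v : Fin n → ℝ) : dot u v = dot v u := by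
  simp [dot, mul_comm]
lemma dot_sub_left (a b u : Fin n → ℝ) : dot (a - b) u = dot a u - dot b u := by
  simp [dot, sub_mul, Finset.sum_sub_distrib]
lemma dot_smul_left (c : ℝ) (a u : Fin n → ℝ) : dot (c • a) u = c * dot a u := by
  simp [dot, Finset.mul_sum, mul_comm, mul_left_comm]

noncomputable def dotCLM (u : Fin n → ℝ) : (Fin n → ℝ) →L[ℝ] ℝ :=
  LinearMap.toContinuousLinearMap
    { toFun := fun v => dot u v
      map_add' := fun a b => by simp [dot, mul_add, Finset.sum_add_distrib]
      map_smul' := fun c a => by simp [dot, Finset.mul_sum, mul_comm, mul_left_comm] }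
lemma dotCLM_apply (u v : Fin n → ℝ) : dotCLM u v = dot u v := rfl

/-- Lemma A: uniform first order expansion of `g` via the directional derivative,
from local Lipschitzness + pointwise directional differentiability, by a compactness
argument on the unit sphere. -/
lemma lemA (Ω : Set (Fin n → ℝ)) (g : (Fin n → ℝ) → (Fin n → ℝ)) (x : Fin n → ℝ)
    (δΩ : ℝ) (hδΩ : 0 < δΩ) (hΩ : ∀ u : Fin n → ℝ, l2norm u < δΩ → x + u ∈ Ω)
    (δL L : ℝ) (hδL : 0 < δL)
    (hL : ∀ u v : Fin n → ℝ, l2norm u < δL → l2norm v < δL →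
      l2norm (g (x + u) - g (x + v)) ≤ L * l2norm (u - v))
    (G : (Fin n → ℝ) → (Fin n → ℝ))
    (hG : ∀ d : Fin n → ℝ, ∀ ε > 0, ∃ δ > 0, ∀ t : ℝ, 0 < t → t < δ →
      l2norm (t⁻¹ • (g (x + t • d) - g x) - G d) ≤ ε) :
    ∀ ε > 0, ∃ δ > 0, ∀ d : Fin n → ℝ, 0 < l2norm d → l2norm d < δ →
      l2norm (g (x + d) - g x - (l2norm d) • G ((l2norm d)⁻¹ • d)) ≤ ε * l2norm d := by
  intro ε hε
  set L' : ℝ := max L 1 with hL'def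
  have hL'pos : (0:ℝ) < L' := lt_of_lt_of_le one_pos (le_max_right _ _)
  have hL' : ∀ u v : Fin n → ℝ, l2norm u < δL → l2norm v < δL →
      l2norm (g (x + u) - g (x + v)) ≤ L' * l2norm (u - v) := fun u v hu hv =>
    le_trans (hL u v hu hv) (mul_le_mul_of_nonneg_right (le_max_left _ _) (l2_nonneg _))
  set r : ℝ := ε / (4 * L') with hrdef
  have hr : 0 < r := by positivity
  -- per-direction δ with a convenient form
  have hchoice : ∀ u : Fin n → ℝ, ∃ δ > 0, ∀ t : ℝ, 0 < t → t < δ →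
      l2norm (g (x + t • u) - g x - t • G u) ≤ (ε/4) * t := by
    intro u
    obtain ⟨δ, hδ, H⟩ := hG u (ε/4) (by positivity)
    refine ⟨δ, hδ, fun t ht htδ => ?_⟩
    have h0 := H t ht htδ
    have hkey : g (x + t • u) - g x - t • G u = t • (t⁻¹ • (g (x + t • u) - g x) - G u) := by
      rw [smul_sub, smul_smul, mul_inv_cancel₀ (ne_of_gt ht), one_smul]
    rw [hkey, l2_smul, abs_of_pos ht, mul_comm]
    exact mul_le_mul_of_nonneg_right h0 (le_of_lt ht)
  choose Δ hΔpos hΔ using hchoice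
  -- Lipschitz-type bound for G on unit vectors
  have GLip : ∀ u v : Fin n → ℝ, l2norm u = 1 → l2norm v = 1 →
      l2norm (G u - G v) ≤ L' * l2norm (u - v) := by
    intro u v hu hv
    refine le_of_forall_pos_le_add (fun η hη => ?_)
    obtain ⟨du, hdu, hu'⟩ := hG u (η/2) (by positivity)
    obtain ⟨dv, hdv, hv'⟩ := hG v (η/2) (by positivity)
    set m : ℝ := min (min du dv) (min δΩ δL) with hmdef
    have hm : 0 < m := by positivity
    set s : ℝ := m / 2 with hsdef
    have hs0 : 0 < s := by positivity
    have hsm : s < m := by rw [hsdef]; linarith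
    have hsdu : s < du := lt_of_lt_of_le hsm (le_trans (min_le_left _ _) (min_le_left _ _))
    have hsdv : s < dv := lt_of_lt_of_le hsm (le_trans (min_le_left _ _) (min_le_right _ _))
    have hsδL : s < δL := lt_of_lt_of_le hsm (le_trans (min_le_right _ _) (min_le_right _ _))
    have h1 := hu' s hs0 hsdu
    have h2 := hv' s hs0 hsdv
    have hsu : l2norm (s • u) < δL := by rw [l2_smul, abs_of_pos hs0, hu, mul_one]; exact hsδL
    have hsv : l2norm (s • v) < δL := by rw [l2_smul, abs_of_pos hs0, hv, mul_one]; exact hsδL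
    have hLuv := hL' (s • u) (s • v) hsu hsv
    set A : Fin n → ℝ := s⁻¹ • (g (x + s • u) - g x) with hAdef
    set B : Fin n → ℝ := s⁻¹ • (g (x + s • v) - g x) with hBdef
    have hkey : G u - G v = -(A - G u) + (A - B) + (B - G v) := by abel
    have hAB : l2norm (A - B) ≤ L' * l2norm (u - v) := by
      have : A - B = s⁻¹ • (g (x + s • u) - g (x + s • v)) := by
        rw [hAdef, hBdef, ← smul_sub]; congr 1; abel
      rw [this, l2_smul, abs_of_pos (inv_pos.mpr hs0)]
      have : l2norm (s • u - s • v) = s * l2norm (u - v) := by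
        rw [← smul_sub, l2_smul, abs_of_pos hs0]
      calc s⁻¹ * l2norm (g (x + s • u) - g (x + s • v))
          ≤ s⁻¹ * (L' * (s * l2norm (u - v))) := by
            refine mul_le_mul_of_nonneg_left ?_ (le_of_lt (inv_pos.mpr hs0))
            rw [← this]; exact hLuv
        _ = L' * l2norm (u - v) := by field_simp
    calc l2norm (G u - G v) ≤ l2norm (-(A - G u)) + l2norm (A - B) + l2norm (B - G v) := by
          rw [hkey]; exact l2_add3_le _ _ _
      _ ≤ η/2 + (L' * l2norm (u - v)) + η/2 := by
          refine add_le_add (add_le_add ?_ hAB) h2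
          rw [l2_neg]; exact h1
      _ = L' * l2norm (u - v) + η := by ring
  -- compactness of the unit sphere and the covering
  set S : Set (Fin n → ℝ) := {v | l2norm v = 1} with hSdef
  have hScpt : IsCompact S := by
    refine Metric.isCompact_of_isClosed_isBounded ?_ ?_
    · have : S = l2norm ⁻¹' {1} := rfl
      rw [this]; exact isClosed_singleton.preimage l2_continuous
    · refine (Metric.isBounded_closedBall (x := (0 : Fin n → ℝ)) (r := 1)).subset ?_
      intro v hv
      rw [Metric.mem_closedBall, dist_zero_right]
      exact le_trans (sup_le_l2 v) (le_of_eq hv)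
  have hopen : ∀ u : S, IsOpen {v : Fin n → ℝ | l2norm (v - u.1) < r} := by
    intro u
    have : {v : Fin n → ℝ | l2norm (v - u.1) < r}
        = (fun v => l2norm (v - u.1)) ⁻¹' (Set.Iio r) := rfl
    rw [this]
    exact isOpen_Iio.preimage (l2_continuous.comp (continuous_id.sub continuous_const))
  have hcover : S ⊆ ⋃ u : S, {v : Fin n → ℝ | l2norm (v - u.1) < r} := by
    intro v hv
    exact Set.mem_iUnion.mpr ⟨⟨v, hv⟩, by simp [sub_self, l2_zero, hr]⟩
  obtain ⟨F, hF⟩ := hScpt.elim_finite_subcover _ hopen hcover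
  by_cases hFne : F.Nonempty
  · refine ⟨min (min δΩ δL) (F.inf' hFne (fun u => Δ u.1)), ?_, ?_⟩
    · refine lt_min (by positivity) ?_
      rw [Finset.lt_inf'_iff]
      exact fun u _ => hΔpos u.1
    · intro d hd0 hdδ
      set t : ℝ := l2norm d with htdef
      set v : Fin n → ℝ := t⁻¹ • d with hvdef
      have htpos : 0 < t := hd0
      have hv1 : l2norm v = 1 := by
        rw [hvdef, l2_smul, abs_of_pos (inv_pos.mpr htpos), ← htdef, inv_mul_cancel₀ (ne_of_gt htpos)]
      have htv : t • v = d := by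
        rw [hvdef, smul_smul, mul_inv_cancel₀ (ne_of_gt htpos), one_smul]
      have hvS : v ∈ S := hv1
      obtain ⟨u, hu, huv⟩ := Set.mem_iUnion₂.mp (hF hvS)
      have huv : l2norm (v - u.1) < r := huv
      have htΔ : t < Δ u.1 := lt_of_lt_of_le hdδ
        (le_trans (min_le_right _ _) (Finset.inf'_le _ hu))
      have htδΩ : t < δΩ := lt_of_lt_of_le hdδ (le_trans (min_le_left _ _) (min_le_left _ _))
      have htδL : t < δL := lt_of_lt_of_le hdδ (le_trans (min_le_left _ _) (min_le_right _ _))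
      have hLru : L' * r ≤ ε / 4 := by
        have : L' * r = ε / 4 := by
          rw [hrdef]; field_simp
        exact le_of_eq this
      have hkey : g (x + d) - g x - t • G v =
          (g (x + t • v) - g (x + t • u.1)) + (g (x + t • u.1) - g x - t • G u.1)
            + t • (G u.1 - G v) := by
        rw [htv, smul_sub]; abel
      have hnu : l2norm (t • u.1) < δL := by
        rw [l2_smul, abs_of_pos htpos, u.2, mul_one]; exact htδL
      have hnv : l2norm (t • v) < δL := by rw [htv]; exact htδL
      have e1 : l2norm (g (x + t • v) - g (x + t • u.1)) ≤ (ε/4) * t := by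
        refine le_trans (hL' _ _ hnv hnu) ?_
        have : t • v - t • u.1 = t • (v - u.1) := by rw [smul_sub]
        rw [this, l2_smul, abs_of_pos htpos]
        calc L' * (t * l2norm (v - u.1)) ≤ L' * (t * r) := by
              refine mul_le_mul_of_nonneg_left ?_ (le_of_lt hL'pos)
              exact mul_le_mul_of_nonneg_left (le_of_lt huv) (le_of_lt htpos)
          _ = (L' * r) * t := by ring
          _ ≤ (ε/4) * t := mul_le_mul_of_nonneg_right hLru (le_of_lt htpos)
      have e2 : l2norm (g (x + t • u.1) - g x - t • G u.1) ≤ (ε/4) * t :=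
        hΔ u.1 t htpos htΔ
      have e3 : l2norm (t • (G u.1 - G v)) ≤ (ε/4) * t := by
        rw [l2_smul, abs_of_pos htpos]
        calc t * l2norm (G u.1 - G v) ≤ t * (L' * l2norm (u.1 - v)) :=
              mul_le_mul_of_nonneg_left (GLip u.1 v u.2 hv1) (le_of_lt htpos)
          _ ≤ t * (L' * r) := by
              refine mul_le_mul_of_nonneg_left ?_ (le_of_lt htpos)
              refine mul_le_mul_of_nonneg_left ?_ (le_of_lt hL'pos)
              rw [l2_sub_rev]; exact le_of_lt huv
          _ ≤ (ε/4) * t := by nlinarith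
      calc l2norm (g (x + d) - g x - t • G v)
          ≤ (ε/4) * t + (ε/4) * t + (ε/4) * t := by
            rw [hkey]; exact le_trans (l2_add3_le _ _ _) (by linarith)
        _ ≤ ε * t := by nlinarith
  · refine ⟨1, one_pos, fun d hd0 _ => ?_⟩
    exfalso
    have hv1 : l2norm ((l2norm d)⁻¹ • d) = 1 := by
      rw [l2_smul, abs_of_pos (inv_pos.mpr hd0), inv_mul_cancel₀ (ne_of_gt hd0)]
    obtain ⟨u, hu, -⟩ := Set.mem_iUnion₂.mp (hF hv1)
    exact hFne ⟨u, hu⟩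

end SOE

/-- **Proposition 7.** Let `θ` be continuously differentiable on an open set `Ω` with
locally Lipschitz gradient `g = ∇θ`.  If `K` is a nonempty compact valued, upper
semicontinuous multifunction into symmetric matrices and `g` is semismooth at `x ∈ Ω`
with respect to `K`, then
`θ(x+d) − θ(x) − ⟨g(x), d⟩ − (1/2)⟨d, V d⟩ = o(‖d‖²)` for `V ∈ K(x+d)`, `d → 0`. -/
theorem second_order_expansion {n : ℕ}
    (Ω : Set (Fin n → ℝ))
    (hΩopen : ∀ y ∈ Ω, ∃ ε > 0, ∀ y' : Fin n → ℝ, l2norm (y' - y) < ε → y' ∈ Ω)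
    (θ : (Fin n → ℝ) → ℝ) (g : (Fin n → ℝ) → (Fin n → ℝ))
    -- θ is differentiable on Ω with gradient g
    (hdiff : ∀ y ∈ Ω, ∀ ε > 0, ∃ δ > 0, ∀ y' ∈ Ω, l2norm (y' - y) < δ →
      |θ y' - θ y - dot (g y) (y' - y)| ≤ ε * l2norm (y' - y))
    -- continuity of the gradient g on Ω
    (hcont : ∀ y ∈ Ω, ∀ ε > 0, ∃ δ > 0, ∀ y' ∈ Ω, l2norm (y' - y) < δ →
      l2norm (g y' - g y) ≤ ε)
    -- g is locally Lipschitz on Ω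
    (hlip : ∀ y ∈ Ω, ∃ δ > 0, ∃ L : ℝ, ∀ y₁ ∈ Ω, ∀ y₂ ∈ Ω,
      l2norm (y₁ - y) < δ → l2norm (y₂ - y) < δ →
      l2norm (g y₁ - g y₂) ≤ L * l2norm (y₁ - y₂))
    -- K is a nonempty compact valued multifunction into symmetric matrices
    (K : (Fin n → ℝ) → Set (Matrix (Fin n) (Fin n) ℝ))
    (hKne : ∀ y ∈ Ω, (K y).Nonempty)
    (hKcpt : ∀ y ∈ Ω, IsCompact (K y))
    (hKsymm : ∀ y ∈ Ω, ∀ V ∈ K y, V.IsSymm)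
    -- upper semicontinuity of K
    (husc : ∀ y ∈ Ω, ∀ U : Set (Matrix (Fin n) (Fin n) ℝ), IsOpen U → K y ⊆ U →
      ∃ δ > 0, ∀ y' ∈ Ω, l2norm (y' - y) < δ → K y' ⊆ U)
    (x : Fin n → ℝ) (hx : x ∈ Ω)
    -- g is directionally differentiable at x
    (hdir : ∀ d : Fin n → ℝ, ∃ gd : Fin n → ℝ, ∀ ε > 0, ∃ δ > 0, ∀ t : ℝ,
      0 < t → t < δ → l2norm (t⁻¹ • (g (x + t • d) - g x) - gd) ≤ ε)
    -- g is semismooth at x with respect to K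
    (hss : ∀ ε > 0, ∃ δ > 0, ∀ d : Fin n → ℝ, 0 < l2norm d → l2norm d < δ →
      x + d ∈ Ω → ∀ V ∈ K (x + d),
      l2norm (g (x + d) - g x - V.mulVec d) ≤ ε * l2norm d) :
    ∀ ε > 0, ∃ δ > 0, ∀ d : Fin n → ℝ, 0 < l2norm d → l2norm d < δ →
      ∀ V ∈ K (x + d),
      |θ (x + d) - θ x - dot (g x) d - (1/2) * dot d (V.mulVec d)| ≤
        ε * (l2norm d)^2 := by
  classical
  -- Fréchet differentiability of θ on Ω, with derivative `dotCLM (g y)`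
  have hFder : ∀ y ∈ Ω, HasFDerivAt θ (SOE.dotCLM (g y)) y := by
    intro y hy
    rw [hasFDerivAt_iff_isLittleO_nhds_zero, Asymptotics.isLittleO_iff]
    intro c hc
    set c' : ℝ := c / (Real.sqrt n + 1) with hc'def
    have hsn : (0:ℝ) < Real.sqrt n + 1 := by positivity
    have hc' : 0 < c' := by positivity
    obtain ⟨δ1, hδ1, H1⟩ := hdiff y hy c' hc'
    obtain ⟨δ2, hδ2, H2⟩ := hΩopen y hy
    rw [Metric.eventually_nhds_iff]
    refine ⟨min δ1 δ2 / (Real.sqrt n + 1), by positivity, fun h hh => ?_⟩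
    rw [dist_zero_right] at hh
    have hnorm : l2norm h ≤ (Real.sqrt n + 1) * ‖h‖ := by
      refine le_trans (SOE.l2_le_sup h) ?_
      nlinarith [norm_nonneg h, Real.sqrt_nonneg (n:ℝ)]
    have hsmall : l2norm h < min δ1 δ2 := by
      calc l2norm h ≤ (Real.sqrt n + 1) * ‖h‖ := hnorm
        _ < (Real.sqrt n + 1) * (min δ1 δ2 / (Real.sqrt n + 1)) :=
            mul_lt_mul_of_pos_left hh hsn
        _ = min δ1 δ2 := by field_simp
    have hsub : l2norm (y + h - y) = l2norm h := by rw [add_sub_cancel_left]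
    have hyh : y + h ∈ Ω := H2 (y + h)
      (by rw [hsub]; exact lt_of_lt_of_le hsmall (min_le_right _ _))
    have hest := H1 (y + h) hyh
      (by rw [hsub]; exact lt_of_lt_of_le hsmall (min_le_left _ _))
    rw [hsub] at hest
    rw [add_sub_cancel_left] at hest
    rw [Real.norm_eq_abs, SOE.dotCLM_apply]
    calc |θ (y + h) - θ y - dot (g y) h| ≤ c' * l2norm h := hest
      _ ≤ c' * ((Real.sqrt n + 1) * ‖h‖) :=
          mul_le_mul_of_nonneg_left hnorm (le_of_lt hc')
      _ = c * ‖h‖ := by rw [hc'def]; field_simp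
  -- setup for Lemma A
  obtain ⟨δΩ, hδΩ, hΩ'⟩ := hΩopen x hx
  have hΩmem : ∀ u : Fin n → ℝ, l2norm u < δΩ → x + u ∈ Ω := by
    intro u hu
    exact hΩ' (x + u) (by rwa [add_sub_cancel_left])
  obtain ⟨δL0, hδL0, L, hLip0⟩ := hlip x hx
  set δL : ℝ := min δL0 δΩ with hδLdef
  have hδL : 0 < δL := lt_min hδL0 hδΩ
  have hLip : ∀ u v : Fin n → ℝ, l2norm u < δL → l2norm v < δL →
      l2norm (g (x + u) - g (x + v)) ≤ L * l2norm (u - v) := by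
    intro u v hu hv
    have hud : l2norm (x + u - x) = l2norm u := by rw [add_sub_cancel_left]
    have hvd : l2norm (x + v - x) = l2norm v := by rw [add_sub_cancel_left]
    have h1 : l2norm (x + u - (x + v)) = l2norm (u - v) := by
      congr 1; abel
    rw [← h1]
    refine hLip0 (x + u) (hΩmem u (lt_of_lt_of_le hu (min_le_right _ _)))
      (x + v) (hΩmem v (lt_of_lt_of_le hv (min_le_right _ _))) ?_ ?_
    · rw [hud]; exact lt_of_lt_of_le hu (min_le_left _ _)
    · rw [hvd]; exact lt_of_lt_of_le hv (min_le_left _ _)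
  set G : (Fin n → ℝ) → (Fin n → ℝ) := fun d => Classical.choose (hdir d) with hGdef
  have hG : ∀ d : Fin n → ℝ, ∀ ε > 0, ∃ δ > 0, ∀ t : ℝ, 0 < t → t < δ →
      l2norm (t⁻¹ • (g (x + t • d) - g x) - G d) ≤ ε := fun d =>
    Classical.choose_spec (hdir d)
  have lemA' := SOE.lemA Ω g x δΩ hδΩ hΩmem δL L hδL hLip G hG
  -- positive homogeneity of the normalized directional derivative
  set gHat : (Fin n → ℝ) → (Fin n → ℝ) :=
    fun d => (l2norm d) • G ((l2norm d)⁻¹ • d) with hgHatdef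
  have hgHathom : ∀ (d : Fin n → ℝ) (t : ℝ), 0 < t → 0 < l2norm d →
      gHat (t • d) = t • gHat d := by
    intro d t ht hd
    have h1 : l2norm (t • d) = t * l2norm d := by
      rw [SOE.l2_smul, abs_of_pos ht]
    have h2 : (t * l2norm d)⁻¹ • (t • d) = (l2norm d)⁻¹ • d := by
      rw [smul_smul]
      congr 1
      field_simp
    rw [hgHatdef]
    simp only []
    rw [h1, h2, mul_smul]
  -- main argument
  intro ε hε
  obtain ⟨δA, hδA, HA⟩ := lemA' (ε/3) (by positivity)
  obtain ⟨δs, hδs, Hs⟩ := hss (ε/3) (by positivity)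
  refine ⟨min (min δA δs) δΩ, by positivity, ?_⟩
  intro d hd0 hdδ V hV
  have hdA : l2norm d < δA := lt_of_lt_of_le hdδ (le_trans (min_le_left _ _) (min_le_left _ _))
  have hds : l2norm d < δs := lt_of_lt_of_le hdδ (le_trans (min_le_left _ _) (min_le_right _ _))
  have hdΩ : l2norm d < δΩ := lt_of_lt_of_le hdδ (min_le_right _ _)
  have hxd : x + d ∈ Ω := hΩmem d hdΩ
  set A : ℝ := dot (g x) d with hAdef
  set B : ℝ := dot d (V.mulVec d) with hBdef
  set φ : ℝ → ℝ := fun s => θ (x + s • d) - θ x - s * A - s^2 * (B/2) with hφdef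
  set φ' : ℝ → ℝ := fun s => dot (g (x + s • d) - g x - s • V.mulVec d) d with hφ'def
  have hmemt : ∀ t ∈ Set.Icc (0:ℝ) 1, x + t • d ∈ Ω := by
    intro t ht
    refine hΩmem _ ?_
    rw [SOE.l2_smul]
    calc |t| * l2norm d ≤ 1 * l2norm d := by
          refine mul_le_mul_of_nonneg_right ?_ (SOE.l2_nonneg d)
          rw [abs_of_nonneg ht.1]; exact ht.2
      _ = l2norm d := one_mul _
      _ < δΩ := hdΩ
  -- derivative of φ
  have hderiv : ∀ t ∈ Set.Icc (0:ℝ) 1, HasDerivAt φ (φ' t) t := by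
    intro t ht
    have hcurve : HasDerivAt (fun s : ℝ => x + s • d) d t := by
      simpa using ((hasDerivAt_id t).smul_const d).const_add x
    have h1 : HasDerivAt (fun s : ℝ => θ (x + s • d)) (SOE.dotCLM (g (x + t • d)) d) t :=
      (hFder _ (hmemt t ht)).comp_hasDerivAt t hcurve
    have h2 : HasDerivAt (fun s : ℝ => s * A) A t := by
      simpa using (hasDerivAt_id t).mul_const A
    have h3 : HasDerivAt (fun s : ℝ => s^2 * (B/2)) ((2 * t^1) * (B/2)) t := by
      exact_mod_cast (hasDerivAt_pow 2 t).mul_const (B/2)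
    have h4 := ((h1.sub_const (θ x)).sub h2).sub h3
    have heq : SOE.dotCLM (g (x + t • d)) d - A - (2 * t^1) * (B/2) = φ' t := by
      rw [SOE.dotCLM_apply, hφ'def]
      simp only []
      rw [SOE.dot_sub_left, SOE.dot_sub_left, SOE.dot_smul_left, hAdef, hBdef,
        SOE.dot_comm d (V.mulVec d)]
      ring
    rw [heq] at h4
    exact h4
  -- bound on φ'
  have hbound : ∀ t ∈ Set.Icc (0:ℝ) 1, ‖φ' t‖ ≤ ε * (l2norm d)^2 := by
    intro t ht
    rw [Real.norm_eq_abs]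
    have habs : |φ' t| ≤ l2norm (g (x + t • d) - g x - t • V.mulVec d) * l2norm d :=
      SOE.abs_dot_le _ _
    have hw : l2norm (g (x + t • d) - g x - t • V.mulVec d) ≤ ε * l2norm d := by
      rcases eq_or_lt_of_le ht.1 with h0 | h0
      · rw [← h0]
        have hz : g (x + (0:ℝ) • d) - g x - (0:ℝ) • V.mulVec d = 0 := by
          simp
        rw [hz, SOE.l2_zero]
        positivity
      · have hdt0 : 0 < l2norm (t • d) := by
          rw [SOE.l2_smul, abs_of_pos h0]; positivity
        have hdtδ : l2norm (t • d) < δA := by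
          rw [SOE.l2_smul, abs_of_pos h0]
          calc t * l2norm d ≤ 1 * l2norm d :=
                mul_le_mul_of_nonneg_right ht.2 (SOE.l2_nonneg d)
            _ = l2norm d := one_mul _
            _ < δA := hdA
        have e1 := HA (t • d) hdt0 hdtδ
        rw [show (l2norm (t • d)) • G ((l2norm (t • d))⁻¹ • (t • d)) = gHat (t • d) from rfl,
          hgHathom d t h0 hd0] at e1
        have e2 := HA d hd0 hdA
        rw [show (l2norm d) • G ((l2norm d)⁻¹ • d) = gHat d from rfl] at e2
        have e3 := Hs d hd0 hds hxd V hV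
        have hkey : g (x + t • d) - g x - t • V.mulVec d =
            (g (x + t • d) - g x - t • gHat d) + t • (gHat d - (g (x + d) - g x))
              + t • ((g (x + d) - g x) - V.mulVec d) := by
          simp only [smul_sub]; abel
        have ha1 : l2norm (g (x + t • d) - g x - t • gHat d) ≤ (ε/3) * l2norm d := by
          refine le_trans e1 ?_
          rw [SOE.l2_smul, abs_of_pos h0]
          nlinarith [mul_nonneg (mul_nonneg (by positivity : (0:ℝ) ≤ ε/3)
            (SOE.l2_nonneg d)) (by linarith [ht.2] : (0:ℝ) ≤ 1 - t)]
        have ha2 : l2norm (t • (gHat d - (g (x + d) - g x))) ≤ (ε/3) * l2norm d := by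
          rw [SOE.l2_smul, abs_of_pos h0, SOE.l2_sub_rev]
          have : g (x + d) - g x - gHat d = (g (x + d) - g x) - gHat d := rfl
          calc t * l2norm ((g (x + d) - g x) - gHat d) ≤ 1 * ((ε/3) * l2norm d) := by
                refine mul_le_mul ht.2 ?_ (SOE.l2_nonneg _) zero_le_one
                rw [← this]; exact e2
            _ = (ε/3) * l2norm d := one_mul _
        have ha3 : l2norm (t • ((g (x + d) - g x) - V.mulVec d)) ≤ (ε/3) * l2norm d := by
          rw [SOE.l2_smul, abs_of_pos h0]
          have : (g (x + d) - g x) - V.mulVec d = g (x + d) - g x - V.mulVec d := rfl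
          calc t * l2norm ((g (x + d) - g x) - V.mulVec d) ≤ 1 * ((ε/3) * l2norm d) := by
                refine mul_le_mul ht.2 ?_ (SOE.l2_nonneg _) zero_le_one
                rw [this]; exact e3
            _ = (ε/3) * l2norm d := one_mul _
        calc l2norm (g (x + t • d) - g x - t • V.mulVec d)
            ≤ (ε/3) * l2norm d + (ε/3) * l2norm d + (ε/3) * l2norm d := by
              rw [hkey]
              exact le_trans (SOE.l2_add3_le _ _ _) (by linarith)
          _ = ε * l2norm d := by ring
    calc |φ' t| ≤ l2norm (g (x + t • d) - g x - t • V.mulVec d) * l2norm d := habs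
      _ ≤ (ε * l2norm d) * l2norm d :=
          mul_le_mul_of_nonneg_right hw (SOE.l2_nonneg d)
      _ = ε * (l2norm d)^2 := by ring
  -- mean value inequality
  have hmvt := (convex_Icc (0:ℝ) 1).norm_image_sub_le_of_norm_hasDerivWithin_le
    (fun t ht => (hderiv t ht).hasDerivWithinAt) hbound
    (Set.left_mem_Icc.mpr zero_le_one) (Set.right_mem_Icc.mpr zero_le_one)
  have hφ0 : φ 0 = 0 := by
    rw [hφdef]; simp
  have hφ1 : φ 1 = θ (x + d) - θ x - A - B/2 := by
    rw [hφdef]; simp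
  rw [hφ1, hφ0, sub_zero] at hmvt
  have : ‖(1:ℝ) - 0‖ = 1 := by norm_num
  rw [this, mul_one, Real.norm_eq_abs] at hmvt
  calc |θ (x + d) - θ x - dot (g x) d - (1/2) * dot d (V.mulVec d)|
      = |θ (x + d) - θ x - A - B/2| := by rw [hAdef, hBdef]; ring_nf
    _ ≤ ε * (l2norm d)^2 := hmvt
end

section
/- Let n ≥ 2, A ∈ ℝ^{m×n}, b ∈ ℝ^m, x̃ ∈ ℝ^n, σ > 0, and let p be the fused lasso regularizer with parameters λ₁, λ₂ ≥ 0. Let p*(s) := sup_{x∈ℝ^n} (⟨s, x⟩ − p(x)) ∈ [0, +∞] and define Ψ : ℝ^m → ℝ by Ψ(y) := (1/2)‖y‖² + ⟨y, b⟩ + inf{ p*(s) − ⟨x̃, Aᵀy + s⟩ + (σ/2)‖Aᵀy + s‖² : s ∈ ℝ^n, p*(s) < +∞ }. Then Ψ is differentiable on ℝ^m with ∇Ψ(y) = y + b − A·Prox_{σp}(x̃ − σAᵀy) for all y ∈ ℝ^m. -/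
open Matrix

/-- The fused lasso regularizer `p(x) = λ₁‖x‖₁ + λ₂‖Bx‖₁`. -/
noncomputable def fusedLasso {n : ℕ} (B : Matrix (Fin (n - 1)) (Fin n) ℝ)
    (lam1 lam2 : ℝ) (x : Fin n → ℝ) : ℝ :=
  lam1 * (∑ i, |x i|) + lam2 * (∑ i, |B.mulVec x i|)

namespace FLaux

variable {N : ℕ}

lemma dot_comm (u v : Fin N → ℝ) : dot u v = dot v u := by
  simp [dot, mul_comm]

lemma dot_add_left (u v w : Fin N → ℝ) : dot (u + v) w = dot u w + dot v w := by
  simp [dot, add_mul, Finset.sum_add_distrib]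

lemma dot_add_right (u v w : Fin N → ℝ) : dot u (v + w) = dot u v + dot u w := by
  simp [dot, mul_add, Finset.sum_add_distrib]

lemma dot_sub_left (u v w : Fin N → ℝ) : dot (u - v) w = dot u w - dot v w := by
  simp [dot, sub_mul, Finset.sum_sub_distrib]

lemma dot_sub_right (u v w : Fin N → ℝ) : dot u (v - w) = dot u v - dot u w := by
  simp [dot, mul_sub, Finset.sum_sub_distrib]

lemma dot_smul_left (c : ℝ) (u v : Fin N → ℝ) : dot (c • u) v = c * dot u v := by
  simp [dot, Finset.mul_sum, mul_assoc]

lemma dot_smul_right (c : ℝ) (u v : Fin N → ℝ) : dot u (c • v) = c * dot u v := by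
  simp only [dot, Pi.smul_apply, smul_eq_mul, Finset.mul_sum]
  exact Finset.sum_congr rfl fun i _ => by ring

lemma dot_self_nonneg (v : Fin N → ℝ) : 0 ≤ dot v v :=
  Finset.sum_nonneg fun i _ => mul_self_nonneg _

lemma sq_l2 (v : Fin N → ℝ) : (l2norm v) ^ 2 = dot v v := by
  rw [l2norm, Real.sq_sqrt (Finset.sum_nonneg fun i _ => sq_nonneg _)]
  simp [dot, sq]

lemma l2_nonneg (v : Fin N → ℝ) : 0 ≤ l2norm v := Real.sqrt_nonneg _

lemma dot_sq_le (u v : Fin N → ℝ) : (dot u v) ^ 2 ≤ dot u u * dot v v := by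
  simpa [dot, sq] using Finset.sum_mul_sq_le_sq_mul_sq Finset.univ u v


variable {n : ℕ}

lemma mulVec_seg (B : Matrix (Fin (n-1)) (Fin n) ℝ) (z x : Fin n → ℝ) (t : ℝ) (i : Fin (n-1)) :
    B.mulVec (z + t • (x - z)) i = B.mulVec z i + t * (B.mulVec x i - B.mulVec z i) := by
  simp only [Matrix.mulVec, dotProduct, Pi.add_apply, Pi.smul_apply, Pi.sub_apply,
    smul_eq_mul, mul_add, mul_sub, Finset.sum_add_distrib, Finset.sum_sub_distrib,
    Finset.mul_sum]
  ring_nf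
  simp [Finset.mul_sum, Finset.sum_sub_distrib, mul_comm, mul_left_comm, mul_sub]
  ring

lemma abs_seg (a bb t : ℝ) (ht0 : 0 ≤ t) (ht1 : t ≤ 1) :
    |a + t * (bb - a)| ≤ |a| + t * (|bb| - |a|) := by
  have h : a + t * (bb - a) = (1 - t) * a + t * bb := by ring
  rw [h]
  calc |(1-t) * a + t * bb| ≤ |(1-t)*a| + |t*bb| := abs_add_le _ _
    _ = (1-t) * |a| + t * |bb| := by
        rw [abs_mul, abs_mul, abs_of_nonneg (by linarith), abs_of_nonneg ht0]
    _ = |a| + t * (|bb| - |a|) := by ring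

lemma fused_convex (B : Matrix (Fin (n-1)) (Fin n) ℝ) (lam1 lam2 : ℝ)
    (h1 : 0 ≤ lam1) (h2 : 0 ≤ lam2) (z x : Fin n → ℝ) {t : ℝ} (ht0 : 0 ≤ t) (ht1 : t ≤ 1) :
    fusedLasso B lam1 lam2 (z + t • (x - z)) ≤
      fusedLasso B lam1 lam2 z + t * (fusedLasso B lam1 lam2 x - fusedLasso B lam1 lam2 z) := by
  have hS1 : (∑ i, |(z + t • (x - z)) i|) ≤ (∑ i, |z i|) + t * ((∑ i, |x i|) - ∑ i, |z i|) := by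
    calc (∑ i, |(z + t • (x - z)) i|) ≤ ∑ i, (|z i| + t * (|x i| - |z i|)) := by
          refine Finset.sum_le_sum fun i _ => ?_
          simpa using abs_seg (z i) (x i) t ht0 ht1
      _ = (∑ i, |z i|) + t * ((∑ i, |x i|) - ∑ i, |z i|) := by
          simp [Finset.sum_add_distrib, Finset.mul_sum, mul_sub, Finset.sum_sub_distrib]
  have hS2 : (∑ i, |B.mulVec (z + t • (x - z)) i|) ≤
      (∑ i, |B.mulVec z i|) + t * ((∑ i, |B.mulVec x i|) - ∑ i, |B.mulVec z i|) := by
    calc (∑ i, |B.mulVec (z + t • (x - z)) i|)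
        ≤ ∑ i, (|B.mulVec z i| + t * (|B.mulVec x i| - |B.mulVec z i|)) := by
          refine Finset.sum_le_sum fun i _ => ?_
          rw [mulVec_seg]
          exact abs_seg _ _ t ht0 ht1
      _ = _ := by
          simp [Finset.sum_add_distrib, Finset.mul_sum, mul_sub, Finset.sum_sub_distrib]
  have g1 := mul_le_mul_of_nonneg_left hS1 h1
  have g2 := mul_le_mul_of_nonneg_left hS2 h2
  unfold fusedLasso
  nlinarith [g1, g2]
lemma dot_neg_left (u v : Fin N → ℝ) : dot (-u) v = -dot u v := by
  simp [dot, Finset.sum_neg_distrib]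

lemma quad_expand (p q : Fin N → ℝ) :
    dot (p - q) (p - q) = dot p p - 2 * dot p q + dot q q := by
  simp only [dot, Pi.sub_apply, Finset.mul_sum, ← Finset.sum_add_distrib,
    ← Finset.sum_sub_distrib]
  exact Finset.sum_congr rfl fun i _ => by ring

lemma quad_expand_add (p q : Fin N → ℝ) (t : ℝ) :
    dot (p + t • q) (p + t • q) = dot p p + 2 * t * dot p q + t ^ 2 * dot q q := by
  simp only [dot, Pi.add_apply, Pi.smul_apply, smul_eq_mul, Finset.mul_sum,
    ← Finset.sum_add_distrib]
  exact Finset.sum_congr rfl fun i _ => by ring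

section Prox

variable {B : Matrix (Fin (n-1)) (Fin n) ℝ} {lam1 lam2 σ : ℝ}
  {prox : (Fin n → ℝ) → (Fin n → ℝ)}

/-- dot-form of the prox property -/
lemma hprox_dot
    (hprox : ∀ u z : Fin n → ℝ,
      σ * fusedLasso B lam1 lam2 (prox u) + (1/2) * (l2norm (prox u - u))^2 ≤
      σ * fusedLasso B lam1 lam2 z + (1/2) * (l2norm (z - u))^2)
    (u z : Fin n → ℝ) :
    σ * fusedLasso B lam1 lam2 (prox u) + (1/2) * dot (prox u - u) (prox u - u) ≤
      σ * fusedLasso B lam1 lam2 z + (1/2) * dot (z - u) (z - u) := by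
  have h := hprox u z
  rwa [sq_l2, sq_l2] at h

lemma prox_subgrad (h1 : 0 ≤ lam1) (h2 : 0 ≤ lam2) (hσ : 0 < σ)
    (hprox : ∀ u z : Fin n → ℝ,
      σ * fusedLasso B lam1 lam2 (prox u) + (1/2) * (l2norm (prox u - u))^2 ≤
      σ * fusedLasso B lam1 lam2 z + (1/2) * (l2norm (z - u))^2)
    (u x : Fin n → ℝ) :
    dot (u - prox u) (x - prox u) ≤
      σ * (fusedLasso B lam1 lam2 x - fusedLasso B lam1 lam2 (prox u)) := by
  set P := fusedLasso B lam1 lam2 with hP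
  set z := prox u with hz
  set a : ℝ := σ * (P x - P z) + dot (z - u) (x - z) with ha
  set c : ℝ := (1/2) * dot (x - z) (x - z) with hcdef
  have hc0 : 0 ≤ c := by
    have := dot_self_nonneg (x - z); rw [hcdef]; linarith
  have key : ∀ t : ℝ, 0 < t → t ≤ 1 → 0 ≤ t * a + t ^ 2 * c := by
    intro t ht0 ht1
    have h1' := hprox_dot hprox u (z + t • (x - z))
    rw [← hz, ← hP] at h1'
    have hconv := fused_convex B lam1 lam2 h1 h2 z x (le_of_lt ht0) ht1
    rw [← hP] at hconv
    have hrw : (z + t • (x - z)) - u = (z - u) + t • (x - z) := by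
      funext i; simp; ring
    rw [hrw, quad_expand_add] at h1'
    have hmul := mul_le_mul_of_nonneg_left hconv (le_of_lt hσ)
    rw [ha, hcdef]
    nlinarith [h1', hmul]
  -- goal reduces to 0 ≤ a
  have hgoal : dot (u - z) (x - z) = -dot (z - u) (x - z) := by
    have : u - z = -(z - u) := by funext i; simp
    rw [this, dot_neg_left]
  rw [hgoal]
  by_contra hcon
  push_neg at hcon
  have ha0 : a < 0 := by rw [ha]; linarith
  have hden : (0:ℝ) < 2 * c + 1 := by linarith
  set t : ℝ := min 1 (-a / (2 * c + 1)) with htdef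
  have ht0 : 0 < t := lt_min one_pos (div_pos (by linarith) hden)
  have ht1 : t ≤ 1 := min_le_left _ _
  have ht2 : t ≤ -a / (2 * c + 1) := min_le_right _ _
  have hkey := key t ht0 ht1
  have hb1 : t * c ≤ (-a / (2 * c + 1)) * c := mul_le_mul_of_nonneg_right ht2 hc0
  have hb2 : (-a / (2 * c + 1)) * c ≤ -a / 2 := by
    rw [div_mul_eq_mul_div, div_le_div_iff₀ hden (by norm_num)]
    nlinarith
  have hac : a + t * c < 0 := by linarith
  have : t * a + t ^ 2 * c < 0 := by nlinarith
  linarith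

end Prox
section Prox2

variable {B : Matrix (Fin (n-1)) (Fin n) ℝ} {lam1 lam2 σ : ℝ}
  {prox : (Fin n → ℝ) → (Fin n → ℝ)}

variable (h1 : 0 ≤ lam1) (h2 : 0 ≤ lam2) (hσ : 0 < σ)
    (hprox : ∀ u z : Fin n → ℝ,
      σ * fusedLasso B lam1 lam2 (prox u) + (1/2) * (l2norm (prox u - u))^2 ≤
      σ * fusedLasso B lam1 lam2 z + (1/2) * (l2norm (z - u))^2)

include h1 h2 hσ hprox

lemma prox_monotone (u u' : Fin n → ℝ) :
    dot (prox u' - prox u) (prox u' - prox u) ≤ dot (u' - u) (prox u' - prox u) := by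
  set z := prox u
  set z' := prox u'
  have hA := prox_subgrad h1 h2 hσ hprox u z'
  have hB := prox_subgrad h1 h2 hσ hprox u' z
  simp only [dot_sub_left, dot_sub_right] at hA hB ⊢
  have c1 := dot_comm z z'
  linarith

lemma prox_dot_le (u u' : Fin n → ℝ) :
    dot (prox u' - prox u) (u' - u) ≤ dot (u' - u) (u' - u) := by
  set zd := prox u' - prox u with hzd
  set ud := u' - u with hud
  have hmono : dot zd zd ≤ dot ud zd := prox_monotone h1 h2 hσ hprox u u'
  have hcomm : dot ud zd = dot zd ud := dot_comm _ _
  have hE : 0 ≤ dot zd zd := dot_self_nonneg zd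
  have hD : 0 ≤ dot ud ud := dot_self_nonneg ud
  have hCS : (dot zd ud) ^ 2 ≤ dot zd zd * dot ud ud := dot_sq_le zd ud
  rcases eq_or_lt_of_le (hcomm ▸ hmono.trans' hE) with hc | hc
  · -- 0 = dot zd ud
    rw [← hc]; exact hD
  · -- 0 < dot zd ud
    have h3 : dot zd zd * dot ud ud ≤ dot zd ud * dot ud ud :=
      mul_le_mul_of_nonneg_right (hcomm ▸ hmono) hD
    have h4 : dot zd ud * dot zd ud ≤ dot zd ud * dot ud ud := by nlinarith
    exact le_of_mul_le_mul_left h4 hc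

/-- Moreau envelope one-sided bounds. -/
lemma env_bound (u u' : Fin n → ℝ) :
    |(σ * fusedLasso B lam1 lam2 (prox u') + (1/2) * dot (prox u' - u') (prox u' - u'))
      - (σ * fusedLasso B lam1 lam2 (prox u) + (1/2) * dot (prox u - u) (prox u - u))
      - dot (u - prox u) (u' - u)| ≤ dot (u' - u) (u' - u) := by
  have hD : 0 ≤ dot (u' - u) (u' - u) := dot_self_nonneg _
  have hup := hprox_dot hprox u' (prox u)
  have E1 : dot (prox u - u') (prox u - u') = dot (prox u - u) (prox u - u)
      - 2 * dot (prox u - u) (u' - u) + dot (u' - u) (u' - u) := by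
    simp only [dot, Pi.sub_apply, Finset.mul_sum, ← Finset.sum_add_distrib,
      ← Finset.sum_sub_distrib]
    exact Finset.sum_congr rfl fun i _ => by ring
  rw [E1] at hup
  have hlo := hprox_dot hprox u (prox u')
  have E2 : dot (prox u' - u) (prox u' - u) = dot (prox u' - u') (prox u' - u')
      + 2 * dot (prox u' - u') (u' - u) + dot (u' - u) (u' - u) := by
    simp only [dot, Pi.sub_apply, Finset.mul_sum, ← Finset.sum_add_distrib,
      ← Finset.sum_sub_distrib]
    exact Finset.sum_congr rfl fun i _ => by ring
  rw [E2] at hlo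
  have hcross := prox_dot_le h1 h2 hσ hprox u u'
  have E3 : dot (prox u' - u') (u' - u) = dot (prox u' - prox u) (u' - u)
      + dot (prox u - u) (u' - u) - dot (u' - u) (u' - u) := by
    simp only [dot, Pi.sub_apply, Finset.mul_sum, ← Finset.sum_add_distrib,
      ← Finset.sum_sub_distrib]
    exact Finset.sum_congr rfl fun i _ => by ring
  have E4 : dot (u - prox u) (u' - u) = - dot (prox u - u) (u' - u) := by
    simp only [dot, Pi.sub_apply, ← Finset.sum_neg_distrib]
    exact Finset.sum_congr rfl fun i _ => by ring
  rw [abs_le]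
  constructor
  · linarith
  · linarith

end Prox2
lemma dot_transpose {m : ℕ} (A : Matrix (Fin m) (Fin n) ℝ) (v : Fin m → ℝ) (w : Fin n → ℝ) :
    dot (Aᵀ.mulVec v) w = dot v (A.mulVec w) := by
  simp only [dot, Matrix.mulVec, dotProduct, Matrix.transpose_apply, Finset.sum_mul,
    Finset.mul_sum]
  rw [Finset.sum_comm]
  exact Finset.sum_congr rfl fun i _ => Finset.sum_congr rfl fun j _ => by ring

lemma dot_transpose_right {m : ℕ} (A : Matrix (Fin m) (Fin n) ℝ) (v : Fin m → ℝ)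
    (w : Fin n → ℝ) : dot w (Aᵀ.mulVec v) = dot v (A.mulVec w) := by
  rw [dot_comm, dot_transpose]

lemma transpose_norm_bound {m : ℕ} (A : Matrix (Fin m) (Fin n) ℝ) (d : Fin m → ℝ) :
    dot (Aᵀ.mulVec d) (Aᵀ.mulVec d) ≤ (∑ j, ∑ i, (A i j)^2) * dot d d := by
  have hdd : dot d d = ∑ i, (d i)^2 := by simp [dot, sq]
  have hterm : ∀ j : Fin n, (Aᵀ.mulVec d j) * (Aᵀ.mulVec d j) ≤ (∑ i, (A i j)^2) * dot d d := by
    intro j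
    have h := Finset.sum_mul_sq_le_sq_mul_sq Finset.univ (fun i => A i j) d
    simp only [Matrix.mulVec, dotProduct, Matrix.transpose_apply]
    calc (∑ i, A i j * d i) * (∑ i, A i j * d i) = (∑ i, A i j * d i)^2 := by ring
      _ ≤ (∑ i, (A i j)^2) * ∑ i, (d i)^2 := h
      _ = (∑ i, (A i j)^2) * dot d d := by rw [hdd]
  calc dot (Aᵀ.mulVec d) (Aᵀ.mulVec d) = ∑ j, (Aᵀ.mulVec d j) * (Aᵀ.mulVec d j) := rfl
    _ ≤ ∑ j, (∑ i, (A i j)^2) * dot d d := Finset.sum_le_sum fun j _ => hterm j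
    _ = (∑ j, ∑ i, (A i j)^2) * dot d d := by rw [Finset.sum_mul]

section KeyFormula

variable {B : Matrix (Fin (n-1)) (Fin n) ℝ} {lam1 lam2 σ : ℝ}
  {prox : (Fin n → ℝ) → (Fin n → ℝ)}

lemma key_formula {m : ℕ} (A : Matrix (Fin m) (Fin n) ℝ) (xt : Fin n → ℝ)
    (h1 : 0 ≤ lam1) (h2 : 0 ≤ lam2) (hσ : 0 < σ)
    (hprox : ∀ u z : Fin n → ℝ,
      σ * fusedLasso B lam1 lam2 (prox u) + (1/2) * (l2norm (prox u - u))^2 ≤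
      σ * fusedLasso B lam1 lam2 z + (1/2) * (l2norm (z - u))^2)
    (y : Fin m → ℝ) :
    sInf {t : ℝ | ∃ s : Fin n → ℝ,
        BddAbove (Set.range fun x : Fin n → ℝ => dot s x - fusedLasso B lam1 lam2 x) ∧
        t = sSup (Set.range fun x : Fin n → ℝ => dot s x - fusedLasso B lam1 lam2 x) -
              dot xt (Aᵀ.mulVec y + s) + (σ/2) * (l2norm (Aᵀ.mulVec y + s))^2}
    = (1/(2*σ)) * dot (xt - σ • Aᵀ.mulVec y) (xt - σ • Aᵀ.mulVec y)
      - fusedLasso B lam1 lam2 (prox (xt - σ • Aᵀ.mulVec y))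
      - σ⁻¹ * ((1/2) * dot (prox (xt - σ • Aᵀ.mulVec y) - (xt - σ • Aᵀ.mulVec y))
                 (prox (xt - σ • Aᵀ.mulVec y) - (xt - σ • Aᵀ.mulVec y)))
      - (1/(2*σ)) * dot xt xt := by
  have hσ' : σ ≠ 0 := ne_of_gt hσ
  set P := fusedLasso B lam1 lam2 with hP
  set u : Fin n → ℝ := xt - σ • Aᵀ.mulVec y with hu
  set z : Fin n → ℝ := prox u with hzdef
  set sstar : Fin n → ℝ := σ⁻¹ • (u - z) with hs
  -- the maximizing property of z for the conjugate at sstar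
  have hmax : ∀ x : Fin n → ℝ, dot sstar x - P x ≤ dot sstar z - P z := by
    intro x
    have hsg := prox_subgrad h1 h2 hσ hprox u x
    rw [← hzdef, ← hP] at hsg
    have e1 : dot sstar x - dot sstar z = σ⁻¹ * dot (u - z) (x - z) := by
      rw [hs, dot_smul_left, dot_smul_left, ← mul_sub, dot_sub_right]
    have e2 : σ⁻¹ * dot (u - z) (x - z) ≤ σ⁻¹ * (σ * (P x - P z)) :=
      mul_le_mul_of_nonneg_left hsg (inv_nonneg.mpr (le_of_lt hσ))
    rw [inv_mul_cancel_left₀ hσ'] at e2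
    linarith [e1 ▸ e2]
  have hgr : IsGreatest (Set.range fun x : Fin n → ℝ => dot sstar x - P x)
      (dot sstar z - P z) := ⟨⟨z, rfl⟩, by rintro r ⟨x, rfl⟩; exact hmax x⟩
  apply IsLeast.csInf_eq
  constructor
  · -- membership
    refine ⟨sstar, hgr.bddAbove, ?_⟩
    rw [hgr.csSup_eq, sq_l2]
    have hw : Aᵀ.mulVec y + sstar = σ⁻¹ • (xt - z) := by
      funext i
      simp only [hs, hu, Pi.add_apply, Pi.smul_apply, Pi.sub_apply, smul_eq_mul]
      field_simp
      ring
    rw [hw]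
    have main_eq : (1/(2*σ)) * dot u u
        - σ⁻¹ * ((1/2) * dot (z - u) (z - u)) - (1/(2*σ)) * dot xt xt
        = dot sstar z - dot xt (σ⁻¹ • (xt - z)) + (σ/2) * dot (σ⁻¹ • (xt - z)) (σ⁻¹ • (xt - z)) := by
      rw [hs]
      simp only [dot, Pi.smul_apply, Pi.sub_apply, smul_eq_mul, Finset.mul_sum,
        ← Finset.sum_add_distrib, ← Finset.sum_sub_distrib]
      refine Finset.sum_congr rfl fun i _ => ?_
      field_simp
      ring
    linarith [main_eq]
  · -- lower bound
    rintro t ⟨s, hbdd, rfl⟩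
    have hle : dot s z - P z ≤ sSup (Set.range fun x : Fin n → ℝ => dot s x - P x) :=
      le_csSup hbdd ⟨z, rfl⟩
    rw [sq_l2]
    have hkey : dot s z - dot xt (Aᵀ.mulVec y + s)
          + (σ/2) * dot (Aᵀ.mulVec y + s) (Aᵀ.mulVec y + s)
        - ((1/(2*σ)) * dot u u - σ⁻¹ * ((1/2) * dot (z - u) (z - u))
           - (1/(2*σ)) * dot xt xt)
        = (σ/2) * dot ((Aᵀ.mulVec y + s) - σ⁻¹ • (xt - z))
            ((Aᵀ.mulVec y + s) - σ⁻¹ • (xt - z)) := by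
      rw [hu]
      simp only [dot, Pi.smul_apply, Pi.sub_apply, Pi.add_apply, smul_eq_mul, Finset.mul_sum,
        ← Finset.sum_add_distrib, ← Finset.sum_sub_distrib]
      refine Finset.sum_congr rfl fun i _ => ?_
      field_simp
      ring
    have hnn : 0 ≤ (σ/2) * dot ((Aᵀ.mulVec y + s) - σ⁻¹ • (xt - z))
        ((Aᵀ.mulVec y + s) - σ⁻¹ • (xt - z)) :=
      mul_nonneg (by linarith) (dot_self_nonneg _)
    linarith [hle, hkey, hnn]

end KeyFormula

end FLaux

open FLaux

set_option maxHeartbeats 1000000 in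
/-- The augmented Lagrangian `Ψ(y) = L_σ(y; x̃)` of the dual problem is differentiable
with `∇Ψ(y) = y + b − A Prox_{σp}(x̃ − σ Aᵀ y)`. -/
theorem aug_lagrangian_gradient {m n : ℕ} (hn : 2 ≤ n)
    (A : Matrix (Fin m) (Fin n) ℝ) (b : Fin m → ℝ) (xt : Fin n → ℝ)
    (σ : ℝ) (hσ : 0 < σ) (lam1 lam2 : ℝ) (hlam1 : 0 ≤ lam1) (hlam2 : 0 ≤ lam2)
    (B : Matrix (Fin (n - 1)) (Fin n) ℝ)
    (hB : ∀ (i : Fin (n - 1)) (l : Fin n),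
      B i l = if (l : ℕ) = (i : ℕ) then 1 else if (l : ℕ) = (i : ℕ) + 1 then -1 else 0)
    -- `prox u = Prox_{σp}(u)` is the minimizer of `σ p(z) + (1/2)‖z − u‖²`
    (prox : (Fin n → ℝ) → (Fin n → ℝ))
    (hprox : ∀ u z : Fin n → ℝ,
      σ * fusedLasso B lam1 lam2 (prox u) + (1/2) * (l2norm (prox u - u))^2 ≤
      σ * fusedLasso B lam1 lam2 z + (1/2) * (l2norm (z - u))^2)
    (Ψ : (Fin m → ℝ) → ℝ)
    -- `Ψ(y) = (1/2)‖y‖² + ⟨y,b⟩ + inf { p*(s) − ⟨x̃, Aᵀy + s⟩ + (σ/2)‖Aᵀy + s‖² : p*(s) < +∞ }`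
    (hΨ : ∀ y : Fin m → ℝ,
      Ψ y = (1/2) * (l2norm y)^2 + dot y b +
        sInf {t : ℝ | ∃ s : Fin n → ℝ,
          BddAbove (Set.range fun x : Fin n → ℝ => dot s x - fusedLasso B lam1 lam2 x) ∧
          t = sSup (Set.range fun x : Fin n → ℝ => dot s x - fusedLasso B lam1 lam2 x) -
                dot xt (Aᵀ.mulVec y + s) + (σ/2) * (l2norm (Aᵀ.mulVec y + s))^2}) :
    ∀ y : Fin m → ℝ, ∀ ε > 0, ∃ δ > 0, ∀ y' : Fin m → ℝ, l2norm (y' - y) < δ →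
      |Ψ y' - Ψ y -
        dot (y + b - A.mulVec (prox (xt - σ • Aᵀ.mulVec y))) (y' - y)| ≤
      ε * l2norm (y' - y) := by
  intro y ε hε
  have hσ' : σ ≠ 0 := ne_of_gt hσ
  set P := fusedLasso B lam1 lam2 with hP
  -- multiplied-out formula for Ψ
  have key2 : ∀ w : Fin m → ℝ, 2 * σ * Ψ w =
      σ * dot w w + 2 * σ * dot w b
      + dot (xt - σ • Aᵀ.mulVec w) (xt - σ • Aᵀ.mulVec w)
      - 2 * σ * P (prox (xt - σ • Aᵀ.mulVec w))
      - dot (prox (xt - σ • Aᵀ.mulVec w) - (xt - σ • Aᵀ.mulVec w))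
          (prox (xt - σ • Aᵀ.mulVec w) - (xt - σ • Aᵀ.mulVec w))
      - dot xt xt := by
    intro w
    rw [hΨ w, key_formula A xt hlam1 hlam2 hσ hprox w, sq_l2, ← hP]
    field_simp
    ring
  -- constants
  set K2 : ℝ := ∑ j : Fin n, ∑ i : Fin m, (A i j)^2 with hK2def
  have hK2 : 0 ≤ K2 := by
    rw [hK2def]
    exact Finset.sum_nonneg fun j _ => Finset.sum_nonneg fun i _ => sq_nonneg _
  set C : ℝ := 1/2 + (3*σ/2) * K2 with hCdef
  have hC : 0 < C := by
    have : 0 ≤ (3*σ/2) * K2 := mul_nonneg (by linarith) hK2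
    rw [hCdef]; linarith
  refine ⟨ε / C, div_pos hε hC, ?_⟩
  intro y' hy'
  set u : Fin n → ℝ := xt - σ • Aᵀ.mulVec y with hu
  set u' : Fin n → ℝ := xt - σ • Aᵀ.mulVec y' with hu'
  set z : Fin n → ℝ := prox u with hz
  set z' : Fin n → ℝ := prox u' with hz'
  -- the envelope remainder
  set R : ℝ := (σ * P z' + (1/2) * dot (z' - u') (z' - u'))
      - (σ * P z + (1/2) * dot (z - u) (z - u)) - dot (u - z) (u' - u) with hR
  have EB : |R| ≤ dot (u' - u) (u' - u) := by
    rw [hR, hz, hz', hP]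
    exact env_bound hlam1 hlam2 hσ hprox u u'
  -- u-difference
  have hdu : u' - u = (-σ) • Aᵀ.mulVec (y' - y) := by
    rw [hu, hu', Matrix.mulVec_sub]
    funext i; simp; ring
  -- linear identities
  have e1 : dot y' y' - dot y y = 2 * dot y (y' - y) + dot (y' - y) (y' - y) := by
    simp only [dot, Pi.sub_apply, Finset.mul_sum, ← Finset.sum_add_distrib,
      ← Finset.sum_sub_distrib]
    exact Finset.sum_congr rfl fun i _ => by ring
  have e2 : dot y' b - dot y b = dot b (y' - y) := by
    simp only [dot, Pi.sub_apply, ← Finset.sum_sub_distrib]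
    exact Finset.sum_congr rfl fun i _ => by ring
  have e3 : dot u' u' - dot u u = 2 * dot u (u' - u) + dot (u' - u) (u' - u) := by
    simp only [dot, Pi.sub_apply, Finset.mul_sum, ← Finset.sum_add_distrib,
      ← Finset.sum_sub_distrib]
    exact Finset.sum_congr rfl fun i _ => by ring
  have e5 : dot u (u' - u) = -σ * dot (y' - y) (A.mulVec u) := by
    rw [hdu, dot_smul_right, dot_transpose_right]
  have e6 : dot (u - z) (u' - u)
      = -σ * (dot (y' - y) (A.mulVec u) - dot (y' - y) (A.mulVec z)) := by
    rw [hdu, dot_smul_right, dot_sub_left, dot_transpose_right, dot_transpose_right]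
  have e7 : dot (y + b - A.mulVec z) (y' - y)
      = dot y (y' - y) + dot b (y' - y) - dot (y' - y) (A.mulVec z) := by
    rw [dot_sub_left, dot_add_left, dot_comm (A.mulVec z) (y' - y)]
  -- the main quadratic-error equation
  have hE : 2 * σ * (Ψ y' - Ψ y - dot (y + b - A.mulVec z) (y' - y))
      = σ * dot (y' - y) (y' - y) + dot (u' - u) (u' - u) - 2 * R := by
    have k1 := key2 y
    have k2 := key2 y'
    rw [← hu, ← hz] at k1
    rw [← hu', ← hz'] at k2
    linear_combination k2 - k1 + σ * e1 + 2 * σ * e2 + e3 + 2 * e5 - 2 * e6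
      - 2 * σ * e7 + 2 * hR
  -- bound the error
  have hDU : dot (u' - u) (u' - u) ≤ σ^2 * (K2 * dot (y' - y) (y' - y)) := by
    have h1' : dot (u' - u) (u' - u)
        = σ^2 * dot (Aᵀ.mulVec (y' - y)) (Aᵀ.mulVec (y' - y)) := by
      rw [hdu, dot_smul_left, dot_smul_right]; ring
    rw [h1', hK2def]
    have := transpose_norm_bound A (y' - y)
    nlinarith [sq_nonneg σ]
  have hDd : 0 ≤ dot (y' - y) (y' - y) := dot_self_nonneg _
  have hCexp : 2 * σ * (C * dot (y' - y) (y' - y))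
      = σ * dot (y' - y) (y' - y) + 3 * (σ^2 * (K2 * dot (y' - y) (y' - y))) := by
    rw [hCdef]; ring
  have habs2 : |2 * σ * (Ψ y' - Ψ y - dot (y + b - A.mulVec z) (y' - y))|
      ≤ 2 * σ * (C * dot (y' - y) (y' - y)) := by
    rw [hE, abs_le]
    have hDU0 : 0 ≤ dot (u' - u) (u' - u) := dot_self_nonneg _
    have hRl := abs_le.mp EB
    have hm1 : 0 ≤ σ * dot (y' - y) (y' - y) := mul_nonneg (le_of_lt hσ) hDd
    have hm2 : 0 ≤ σ^2 * (K2 * dot (y' - y) (y' - y)) :=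
      mul_nonneg (sq_nonneg σ) (mul_nonneg hK2 hDd)
    constructor <;> linarith [hRl.1, hRl.2, hDU, hCexp, hDd, hm1, hm2]
  have habs : |Ψ y' - Ψ y - dot (y + b - A.mulVec z) (y' - y)|
      ≤ C * dot (y' - y) (y' - y) := by
    have h2σ : (0:ℝ) < 2 * σ := by linarith
    have : 2 * σ * |Ψ y' - Ψ y - dot (y + b - A.mulVec z) (y' - y)|
        ≤ 2 * σ * (C * dot (y' - y) (y' - y)) := by
      calc 2 * σ * |Ψ y' - Ψ y - dot (y + b - A.mulVec z) (y' - y)|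
          = |2 * σ * (Ψ y' - Ψ y - dot (y + b - A.mulVec z) (y' - y))| := by
            rw [abs_mul, abs_of_pos h2σ]
        _ ≤ 2 * σ * (C * dot (y' - y) (y' - y)) := habs2
    exact le_of_mul_le_mul_left this h2σ
  -- conclude with the choice of δ
  have hl0 : 0 ≤ l2norm (y' - y) := l2_nonneg _
  have hsq : dot (y' - y) (y' - y) = l2norm (y' - y) * l2norm (y' - y) := by
    rw [← sq_l2]; ring
  have hfin : C * dot (y' - y) (y' - y) ≤ ε * l2norm (y' - y) := by
    rw [hsq]
    have h1' : C * l2norm (y' - y) ≤ C * (ε / C) :=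
      mul_le_mul_of_nonneg_left (le_of_lt hy') (le_of_lt hC)
    have h2' : C * (ε / C) = ε := by field_simp
    calc C * (l2norm (y' - y) * l2norm (y' - y))
        = (C * l2norm (y' - y)) * l2norm (y' - y) := by ring
      _ ≤ ε * l2norm (y' - y) := by
          apply mul_le_mul_of_nonneg_right _ hl0
          rw [← h2']; exact h1'
  exact le_trans habs hfin
end

section
/- Let C ∈ ℝ^{k×n}, D ∈ ℝ^{l×n} with rank(D) = l, c ∈ ℝ^k, d ∈ ℝ^l, and suppose the polyhedron 𝒟 := {x ∈ ℝ^n : Cx ≥ c, Dx = d} is nonempty. Let Q ∈ ℝ^{n×n} be symmetric positive definite, x̄ ∈ ℝ^n, and let s be the unique minimizer of (1/2)⟨s, Qs⟩ − ⟨x̄, s⟩ over 𝒟. Then there exist λ ∈ ℝ^k, μ ∈ ℝ^l and an index set K ⊆ {1,…,k} such that: Qs − x̄ + Cᵀλ + Dᵀμ = 0; Cs ≥ c; Ds = d; λ ≤ 0; λ_i (C_i s − c_i) = 0 for all i; supp(λ) ⊆ K ⊆ I := {i : C_i s = c_i}; and the matrix [C_Kᵀ Dᵀ] ∈ ℝ^{n×(|K|+l)},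 whose columns are the transposed rows of C indexed by K together with the transposed rows of D, has full column rank |K| + l. -/
open Matrix

section Aux
open Matrix Filter

theorem farkas_aux (n : ℕ) : ∀ (m : ℕ) (a : Fin m → Fin n → ℝ) (b : Fin n → ℝ),
    (∃ y : Fin n → ℝ, (∀ i, 0 ≤ a i ⬝ᵥ y) ∧ b ⬝ᵥ y < 0) ∨
    (∃ lam : Fin m → ℝ, (∀ i, 0 ≤ lam i) ∧ b = ∑ i, lam i • a i) := by
  intro m
  induction m with
  | zero =>
    intro a b
    by_cases hb : b = 0
    · exact Or.inr ⟨fun i => 0, fun i => le_rfl, by simp [hb]⟩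
    · refine Or.inl ⟨-b, fun i => i.elim0, ?_⟩
      have h1 : b ⬝ᵥ b ≠ 0 := fun h => hb (dotProduct_self_eq_zero.mp h)
      have h2 : 0 ≤ b ⬝ᵥ b := Finset.sum_nonneg fun i _ => mul_self_nonneg _
      have : 0 < b ⬝ᵥ b := lt_of_le_of_ne h2 (Ne.symm h1)
      simpa [dotProduct_neg] using this
  | succ m ih =>
    intro a b
    set a0 : Fin m → Fin n → ℝ := fun i => a i.castSucc with ha0
    set am : Fin n → ℝ := a (Fin.last m) with ham
    rcases ih a0 b with ⟨y0, hy0a, hy0b⟩ | ⟨lam, hlam, hbsum⟩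
    · by_cases hm : 0 ≤ am ⬝ᵥ y0
      · refine Or.inl ⟨y0, fun i => ?_, hy0b⟩
        refine Fin.lastCases ?_ ?_ i
        · exact hm
        · exact fun j => hy0a j
      push_neg at hm
      set r : ℝ := am ⬝ᵥ y0 with hr
      have hrneg : r < 0 := hm
      have hrne : r ≠ 0 := ne_of_lt hrneg
      set a' : Fin m → Fin n → ℝ := fun i => r • a0 i - (a0 i ⬝ᵥ y0) • am with ha'
      set b' : Fin n → ℝ := r • b - (b ⬝ᵥ y0) • am with hb'
      rcases ih a' b' with ⟨y, hya, hyb⟩ | ⟨lam, hlam, hbsum⟩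
      · -- construct z
        refine Or.inl ⟨r • y - (am ⬝ᵥ y) • y0, fun i => ?_, ?_⟩
        · refine Fin.lastCases ?_ ?_ i
          · show 0 ≤ am ⬝ᵥ (r • y - (am ⬝ᵥ y) • y0)
            have h0 : am ⬝ᵥ (r • y - (am ⬝ᵥ y) • y0)
                = r * (am ⬝ᵥ y) - (am ⬝ᵥ y) * (am ⬝ᵥ y0) := by
              simp [dotProduct_sub, dotProduct_smul, smul_eq_mul]
            rw [h0, ← hr]; linarith [mul_comm r (am ⬝ᵥ y)]
          · intro j
            have := hya j
            simp only [ha', sub_dotProduct, smul_dotProduct, smul_eq_mul] at this ⊢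
            simp only [dotProduct_sub, dotProduct_smul, smul_eq_mul]
            nlinarith [this]
        · have := hyb
          simp only [hb', sub_dotProduct, smul_dotProduct, smul_eq_mul] at this
          simp only [dotProduct_sub, dotProduct_smul, smul_eq_mul]
          nlinarith [this]
      · -- build multipliers
        set q : ℝ := b ⬝ᵥ y0 with hq
        set S : ℝ := ∑ i, lam i * (a0 i ⬝ᵥ y0) with hS
        have hSnn : 0 ≤ S := Finset.sum_nonneg fun i _ => mul_nonneg (hlam i) (hy0a i)
        set mu : ℝ := (q - S) / r with hmu
        have hmupos : 0 ≤ mu := by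
          apply le_of_lt
          apply div_pos_of_neg_of_neg _ hrneg
          linarith [hy0b]
        have hbeq : b = ∑ i, lam i • a0 i + mu • am := by
          have hexp : r • b = ∑ i, (lam i * r) • a0 i + (q - S) • am := by
            have : r • b - q • am = ∑ i, lam i • (r • a0 i - (a0 i ⬝ᵥ y0) • am) := hbsum
            rw [sub_eq_iff_eq_add] at this
            rw [this]
            have hsplit : ∑ i, lam i • (r • a0 i - (a0 i ⬝ᵥ y0) • am)
                = ∑ i, (lam i * r) • a0 i - S • am := by
              simp only [smul_sub]
              rw [Finset.sum_sub_distrib]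
              congr 1
              · exact Finset.sum_congr rfl fun i _ => by rw [smul_smul]
              · rw [hS, Finset.sum_smul]
                exact Finset.sum_congr rfl fun i _ => by rw [smul_smul]
            rw [hsplit]
            ext x
            simp only [Pi.add_apply, Pi.sub_apply, Pi.smul_apply, smul_eq_mul]
            ring
          have := congrArg (fun v => r⁻¹ • v) hexp
          simp only [smul_smul, inv_mul_cancel₀ hrne, one_smul, smul_add,
            Finset.smul_sum] at this
          rw [this]
          congr 1
          · refine Finset.sum_congr rfl fun i _ => ?_
            congr 1
            field_simp
          · congr 1
            rw [hmu, div_eq_inv_mul]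
        refine Or.inr ⟨Fin.snoc lam mu, fun i => ?_, ?_⟩
        · refine Fin.lastCases ?_ ?_ i
          · simpa using hmupos
          · intro j; simpa using hlam j
        · rw [Fin.sum_univ_castSucc]
          simpa using hbeq
    · refine Or.inr ⟨Fin.snoc lam 0, fun i => ?_, ?_⟩
      · refine Fin.lastCases ?_ ?_ i
        · simp
        · intro j; simpa using hlam j
      · rw [Fin.sum_univ_castSucc]
        simpa using hbsum

theorem farkas {n : ℕ} {ι : Type*} [Fintype ι] (a : ι → Fin n → ℝ) (b : Fin n → ℝ)
    (h : ∀ y : Fin n → ℝ, (∀ i, 0 ≤ a i ⬝ᵥ y) → 0 ≤ b ⬝ᵥ y) :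
    ∃ lam : ι → ℝ, (∀ i, 0 ≤ lam i) ∧ b = ∑ i, lam i • a i := by
  classical
  obtain ⟨e⟩ := Fintype.truncEquivFin ι
  rcases farkas_aux n (Fintype.card ι) (fun j => a (e.symm j)) b with ⟨y, hy, hyb⟩ | ⟨lam, h1, h2⟩
  · exact absurd (h y (fun i => by simpa using hy (e i))) (not_le.mpr hyb)
  · refine ⟨fun i => lam (e i), fun i => h1 _, ?_⟩
    rw [h2]
    exact (Fintype.sum_equiv e _ _ (fun i => by simp)).symm

lemma dot_eq {m : ℕ} (u v : Fin m → ℝ) : (∑ i, u i * v i) = u ⬝ᵥ v := rfl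

lemma transpose_mulVec_eq_sum {k n : ℕ} (M : Matrix (Fin k) (Fin n) ℝ) (v : Fin k → ℝ) :
    Mᵀ.mulVec v = ∑ i, v i • M i := by
  ext x
  simp [Matrix.mulVec, dotProduct, Matrix.transpose_apply, Finset.sum_apply, mul_comm]


theorem kkt_exists {k l n : ℕ}
    (C : Matrix (Fin k) (Fin n) ℝ) (D : Matrix (Fin l) (Fin n) ℝ)
    (c : Fin k → ℝ) (d : Fin l → ℝ)
    (Q : Matrix (Fin n) (Fin n) ℝ) (hQ : Q.PosDef)
    (xbar : Fin n → ℝ) (s : Fin n → ℝ)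
    (hsfeas : (∀ i, c i ≤ C.mulVec s i) ∧ D.mulVec s = d)
    (hsmin : ∀ x : Fin n → ℝ, (∀ i, c i ≤ C.mulVec x i) → D.mulVec x = d →
      (1/2) * (∑ i, s i * Q.mulVec s i) - ∑ i, xbar i * s i ≤
      (1/2) * (∑ i, x i * Q.mulVec x i) - ∑ i, xbar i * x i) :
    ∃ (lam : Fin k → ℝ) (mu : Fin l → ℝ),
      Cᵀ.mulVec lam + Dᵀ.mulVec mu = xbar - Q.mulVec s ∧
      (∀ i, lam i ≤ 0) ∧ (∀ i, lam i ≠ 0 → C.mulVec s i = c i) := by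
  classical
  have hQsymm : Qᵀ = Q := by
    have h := hQ.1
    ext i j
    simpa using congrFun (congrFun h i) j
  set g : Fin n → ℝ := Q.mulVec s - xbar with hg
  have t1 : Tendsto (fun t : ℝ => t) (nhdsWithin 0 (Set.Ioi 0)) (nhds 0) :=
    tendsto_id.mono_right nhdsWithin_le_nhds
  -- first order condition
  have hfo : ∀ y : Fin n → ℝ, (∀ i, C.mulVec s i = c i → 0 ≤ C i ⬝ᵥ y) →
      (∀ j, D j ⬝ᵥ y = 0) → 0 ≤ g ⬝ᵥ y := by
    intro y hCy hDy
    have hDy0 : D.mulVec y = 0 := funext fun j => hDy j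
    have hxi : ∀ (t : ℝ) (i : Fin k),
        C.mulVec (s + t • y) i = C.mulVec s i + t * (C i ⬝ᵥ y) := by
      intro t i
      rw [Matrix.mulVec_add, Matrix.mulVec_smul]
      simp only [Pi.add_apply, Pi.smul_apply, smul_eq_mul]
      rfl
    have hEfeas : ∀ᶠ t in nhdsWithin (0:ℝ) (Set.Ioi 0),
        ∀ i, c i ≤ C.mulVec (s + t • y) i := by
      rw [eventually_all]
      intro i
      by_cases hi : C.mulVec s i = c i
      · filter_upwards [self_mem_nhdsWithin] with t ht
        rw [hxi t i, hi]
        have h1 := hCy i hi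
        have ht' : (0:ℝ) < t := ht
        nlinarith
      · have hlt : c i < C.mulVec s i := lt_of_le_of_ne (hsfeas.1 i) (Ne.symm hi)
        have htend : Tendsto (fun t : ℝ => C.mulVec s i + t * (C i ⬝ᵥ y))
            (nhdsWithin 0 (Set.Ioi 0)) (nhds (C.mulVec s i)) := by
          have := (tendsto_const_nhds : Tendsto (fun _ : ℝ => C.mulVec s i)
              (nhdsWithin (0:ℝ) (Set.Ioi 0)) (nhds (C.mulVec s i))).add
              (t1.mul_const (C i ⬝ᵥ y))
          simpa using this
        filter_upwards [htend.eventually_const_lt hlt] with t ht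
        rw [hxi t i]
        exact le_of_lt ht
    have hDfeas : ∀ t : ℝ, D.mulVec (s + t • y) = d := by
      intro t
      rw [Matrix.mulVec_add, Matrix.mulVec_smul, hDy0, hsfeas.2]
      simp
    have hsym : s ⬝ᵥ Q.mulVec y = y ⬝ᵥ Q.mulVec s := by
      rw [dotProduct_mulVec s Q y, ← Matrix.mulVec_transpose Q s, hQsymm]
      exact dotProduct_comm _ _
    have hexp : ∀ t : ℝ,
        (1/2) * (∑ i, (s + t • y) i * Q.mulVec (s + t • y) i) - ∑ i, xbar i * (s + t • y) i
          - ((1/2) * (∑ i, s i * Q.mulVec s i) - ∑ i, xbar i * s i)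
        = t * (g ⬝ᵥ y) + t^2/2 * (y ⬝ᵥ Q.mulVec y) := by
      intro t
      rw [dot_eq, dot_eq, dot_eq, dot_eq]
      rw [Matrix.mulVec_add, Matrix.mulVec_smul]
      simp only [dotProduct_add, add_dotProduct, dotProduct_smul, smul_dotProduct,
        smul_eq_mul, hg, sub_dotProduct]
      rw [hsym, dotProduct_comm y (Q.mulVec s)]
      ring
    have hkey : ∀ᶠ t in nhdsWithin (0:ℝ) (Set.Ioi 0),
        0 ≤ g ⬝ᵥ y + t/2 * (y ⬝ᵥ Q.mulVec y) := by
      filter_upwards [hEfeas, self_mem_nhdsWithin] with t hfeast ht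
      have hmin := hsmin (s + t • y) hfeast (hDfeas t)
      have h2 : 0 ≤ t * (g ⬝ᵥ y) + t^2/2 * (y ⬝ᵥ Q.mulVec y) := by
        rw [← hexp t]; linarith
      have ht' : (0:ℝ) < t := ht
      have h3 : t * (g ⬝ᵥ y) + t^2/2 * (y ⬝ᵥ Q.mulVec y)
          = t * (g ⬝ᵥ y + t/2 * (y ⬝ᵥ Q.mulVec y)) := by ring
      rw [h3] at h2
      exact (mul_nonneg_iff_of_pos_left ht').mp h2
    have htends : Tendsto (fun t : ℝ => g ⬝ᵥ y + t/2 * (y ⬝ᵥ Q.mulVec y))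
        (nhdsWithin 0 (Set.Ioi 0)) (nhds (g ⬝ᵥ y)) := by
      have := (tendsto_const_nhds : Tendsto (fun _ : ℝ => g ⬝ᵥ y)
          (nhdsWithin (0:ℝ) (Set.Ioi 0)) (nhds (g ⬝ᵥ y))).add
          ((t1.div_const 2).mul_const (y ⬝ᵥ Q.mulVec y))
      simpa using this
    exact ge_of_tendsto htends hkey
  -- Farkas application
  set a : (Fin k ⊕ (Fin l ⊕ Fin l)) → Fin n → ℝ :=
    Sum.elim (fun i => if C.mulVec s i = c i then C i else 0)
      (Sum.elim (fun j => D j) (fun j => -(D j))) with ha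
  have hfark : ∀ y : Fin n → ℝ, (∀ i, 0 ≤ a i ⬝ᵥ y) → 0 ≤ g ⬝ᵥ y := by
    intro y hy
    apply hfo y
    · intro i hi
      have := hy (Sum.inl i)
      simpa [ha, hi] using this
    · intro j
      have h1 := hy (Sum.inr (Sum.inl j))
      have h2 := hy (Sum.inr (Sum.inr j))
      simp only [ha, Sum.elim_inr, Sum.elim_inl, neg_dotProduct] at h1 h2
      linarith
  obtain ⟨lam0, h0nn, hgsum⟩ := farkas a g hfark
  set lam : Fin k → ℝ := fun i => if C.mulVec s i = c i then -(lam0 (Sum.inl i)) else 0 with hlam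
  set mu : Fin l → ℝ := fun j => lam0 (Sum.inr (Sum.inr j)) - lam0 (Sum.inr (Sum.inl j)) with hmu
  refine ⟨lam, mu, ?_, ?_, ?_⟩
  · set S1 : Fin n → ℝ := ∑ i, lam0 (Sum.inl i) • (if C.mulVec s i = c i then C i else 0) with hS1
    set S2 : Fin n → ℝ := ∑ j, lam0 (Sum.inr (Sum.inl j)) • D j with hS2
    set S3 : Fin n → ℝ := ∑ j, lam0 (Sum.inr (Sum.inr j)) • D j with hS3
    have hgcomb : Q.mulVec s - xbar = S1 + S2 - S3 := by
      rw [hg] at hgsum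
      rw [hgsum, Fintype.sum_sum_type, Fintype.sum_sum_type]
      simp only [ha, Sum.elim_inl, Sum.elim_inr, smul_neg]
      rw [Finset.sum_neg_distrib]
      rw [hS1, hS2, hS3]
      abel
    have h1 : Cᵀ.mulVec lam = -S1 := by
      rw [transpose_mulVec_eq_sum, hS1, ← Finset.sum_neg_distrib]
      apply Finset.sum_congr rfl
      intro i _
      by_cases hi : C.mulVec s i = c i <;> simp [hlam, hi]
    have h2 : Dᵀ.mulVec mu = S3 - S2 := by
      rw [transpose_mulVec_eq_sum, hS2, hS3, ← Finset.sum_sub_distrib]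
      apply Finset.sum_congr rfl
      intro j _
      simp [hmu, sub_smul]
    rw [h1, h2]
    have : xbar - Q.mulVec s = -(S1 + S2 - S3) := by rw [← hgcomb]; abel
    rw [this]; abel
  · intro i
    by_cases hi : C.mulVec s i = c i <;> simp [hlam, hi, h0nn (Sum.inl i)]
  · intro i hi
    by_contra hne
    simp [hlam, hne] at hi


lemma exists_relation {k l n : ℕ} (C : Matrix (Fin k) (Fin n) ℝ) (D : Matrix (Fin l) (Fin n) ℝ)
    (hDind : LinearIndependent ℝ (fun j : Fin l => D j)) (lam : Fin k → ℝ) (K₀ : Finset (Fin k))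
    (hK₀ : ∀ i, i ∈ K₀ ↔ lam i ≠ 0)
    (hind : ¬ LinearIndependent ℝ
      (Sum.elim (fun i : {i // i ∈ K₀} => C (i : Fin k)) (fun j : Fin l => D j))) :
    ∃ (α : Fin k → ℝ) (β : Fin l → ℝ),
      ∑ i, α i • C i + ∑ j, β j • D j = 0 ∧ (∀ i, α i ≠ 0 → lam i ≠ 0) ∧ ∃ i2, 0 < α i2 := by
  classical
  obtain ⟨gc, hgsum, i1, hi1⟩ := Fintype.not_linearIndependent_iff.mp hind
  set α : Fin k → ℝ := fun i => if h : i ∈ K₀ then gc (Sum.inl ⟨i, h⟩) else 0 with hα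
  set β : Fin l → ℝ := fun j => gc (Sum.inr j) with hβ
  have hgαC : ∀ i : {i // i ∈ K₀}, α (i : Fin k) = gc (Sum.inl i) := by
    intro i
    simp [hα, i.2]
  have hrel : ∑ i, α i • C i + ∑ j, β j • D j = 0 := by
    rw [Fintype.sum_sum_type] at hgsum
    simp only [Sum.elim_inl, Sum.elim_inr] at hgsum
    have e1 : ∑ i : {i // i ∈ K₀}, gc (Sum.inl i) • C (i : Fin k) = ∑ i ∈ K₀, α i • C i := by
      rw [← Finset.sum_attach K₀ (fun i => α i • C i)]
      exact Finset.sum_congr rfl fun i _ => by rw [hgαC i]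
    have e2 : ∑ i ∈ K₀, α i • C i = ∑ i, α i • C i := by
      apply Finset.sum_subset (Finset.subset_univ _)
      intro i _ hi
      have h0 : α i = 0 := by simp [hα, hi]
      rw [h0, zero_smul]
    rw [← e2, ← e1]
    exact hgsum
  have hsupp : ∀ i, α i ≠ 0 → lam i ≠ 0 := by
    intro i hi
    by_contra h0
    have hmem : i ∉ K₀ := fun hm => ((hK₀ i).mp hm) h0
    exact hi (by simp [hα, hmem])
  have hαne : ∃ i, α i ≠ 0 := by
    by_contra hall
    push_neg at hall
    have hsum0 : ∑ j, β j • D j = 0 := by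
      have h1 := hrel
      rw [Finset.sum_eq_zero (fun i _ => by rw [hall i, zero_smul]), zero_add] at h1
      exact h1
    have hβ0 : ∀ j, β j = 0 := fun j => Fintype.linearIndependent_iff.mp hDind β hsum0 j
    cases i1 with
    | inl i => exact hi1 (by rw [← hgαC i, hall])
    | inr j => exact hi1 (hβ0 j)
  by_cases hpos : ∃ i, 0 < α i
  · exact ⟨α, β, hrel, hsupp, hpos⟩
  · push_neg at hpos
    obtain ⟨i2, hi2⟩ := hαne
    refine ⟨-α, -β, ?_, fun i hi => hsupp i (by simpa using hi), i2, ?_⟩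
    · have e1 : ∑ i, (-α) i • C i = -∑ i, α i • C i := by
        simp [neg_smul, Finset.sum_neg_distrib]
      have e2 : ∑ j, (-β) j • D j = -∑ j, β j • D j := by
        simp [neg_smul, Finset.sum_neg_distrib]
      rw [e1, e2, ← neg_add, hrel, neg_zero]
    · have h2 : α i2 < 0 := lt_of_le_of_ne (hpos i2) hi2
      simpa using h2

theorem reduce {k l n : ℕ} (C : Matrix (Fin k) (Fin n) ℝ) (D : Matrix (Fin l) (Fin n) ℝ)
    (hDind : LinearIndependent ℝ (fun j : Fin l => D j)) (v : Fin n → ℝ) (P : Fin k → Prop) :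
    ∀ (N : ℕ) (lam : Fin k → ℝ) (mu : Fin l → ℝ),
      (Finset.univ.filter (fun i => lam i ≠ 0)).card ≤ N →
      Cᵀ.mulVec lam + Dᵀ.mulVec mu = v → (∀ i, lam i ≤ 0) → (∀ i, lam i ≠ 0 → P i) →
      ∃ (lam' : Fin k → ℝ) (mu' : Fin l → ℝ) (K : Finset (Fin k)),
        Cᵀ.mulVec lam' + Dᵀ.mulVec mu' = v ∧ (∀ i, lam' i ≤ 0) ∧
        (∀ i, lam' i ≠ 0 → i ∈ K) ∧ (∀ i ∈ K, P i) ∧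
        LinearIndependent ℝ
          (Sum.elim (fun i : {i // i ∈ K} => C (i : Fin k)) (fun j : Fin l => D j)) := by
  classical
  intro N
  induction N with
  | zero =>
    intro lam mu hcard hstat hle hP
    set K₀ := Finset.univ.filter (fun i => lam i ≠ 0) with hK₀def
    have hK₀ : ∀ i, i ∈ K₀ ↔ lam i ≠ 0 := fun i => by simp [hK₀def]
    by_cases hind : LinearIndependent ℝ
        (Sum.elim (fun i : {i // i ∈ K₀} => C (i : Fin k)) (fun j : Fin l => D j))
    · exact ⟨lam, mu, K₀, hstat, hle, fun i hi => (hK₀ i).mpr hi,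
        fun i hi => hP i ((hK₀ i).mp hi), hind⟩
    · obtain ⟨α, β, _, hsupp, i2, hi2⟩ := exists_relation C D hDind lam K₀ hK₀ hind
      exfalso
      have : i2 ∈ K₀ := (hK₀ i2).mpr (hsupp i2 (ne_of_gt hi2))
      have h1 : 0 < K₀.card := Finset.card_pos.mpr ⟨i2, this⟩
      omega
  | succ N ih =>
    intro lam mu hcard hstat hle hP
    set K₀ := Finset.univ.filter (fun i => lam i ≠ 0) with hK₀def
    have hK₀ : ∀ i, i ∈ K₀ ↔ lam i ≠ 0 := fun i => by simp [hK₀def]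
    by_cases hind : LinearIndependent ℝ
        (Sum.elim (fun i : {i // i ∈ K₀} => C (i : Fin k)) (fun j : Fin l => D j))
    · exact ⟨lam, mu, K₀, hstat, hle, fun i hi => (hK₀ i).mpr hi,
        fun i hi => hP i ((hK₀ i).mp hi), hind⟩
    · obtain ⟨α, β, hrel, hsupp, i2, hi2⟩ := exists_relation C D hDind lam K₀ hK₀ hind
      set T := Finset.univ.filter (fun i => 0 < α i) with hTdef
      have hTne : T.Nonempty := ⟨i2, by simp [hTdef, hi2]⟩
      obtain ⟨j0, hj0T, hj0min⟩ := T.exists_min_image (fun i => -lam i / α i) hTne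
      have hαj0 : 0 < α j0 := (Finset.mem_filter.mp hj0T).2
      have hlamj0 : lam j0 < 0 := lt_of_le_of_ne (hle j0) (hsupp j0 (ne_of_gt hαj0))
      set t : ℝ := -lam j0 / α j0 with htdef
      have ht : 0 < t := div_pos (by linarith) hαj0
      set lam' : Fin k → ℝ := fun i => lam i + t * α i with hlam'
      set mu' : Fin l → ℝ := fun j => mu j + t * β j with hmu'
      have hsub : ∀ i, lam' i ≠ 0 → lam i ≠ 0 := by
        intro i hi
        by_contra h0
        have hα0 : α i = 0 := by
          by_contra hc
          exact hsupp i hc h0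
        exact hi (by simp [hlam', h0, hα0])
      have hle' : ∀ i, lam' i ≤ 0 := by
        intro i
        by_cases hαi : 0 < α i
        · have hiT : i ∈ T := by simp [hTdef, hαi]
          have := hj0min i hiT
          have h2 : t * α i ≤ -lam i := by
            rw [htdef]
            calc (-lam j0 / α j0) * α i ≤ (-lam i / α i) * α i := by
                  apply mul_le_mul_of_nonneg_right this (le_of_lt hαi)
              _ = -lam i := by field_simp
          simp only [hlam']
          linarith
        · push_neg at hαi
          have : t * α i ≤ 0 := mul_nonpos_of_nonneg_of_nonpos (le_of_lt ht) hαi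
          have := hle i
          simp only [hlam']
          linarith
      have hj0' : lam' j0 = 0 := by
        simp only [hlam', htdef]
        field_simp
        ring
      have hstat' : Cᵀ.mulVec lam' + Dᵀ.mulVec mu' = v := by
        have hC' : Cᵀ.mulVec lam' = Cᵀ.mulVec lam + t • ∑ i, α i • C i := by
          rw [transpose_mulVec_eq_sum, transpose_mulVec_eq_sum, Finset.smul_sum,
            ← Finset.sum_add_distrib]
          exact Finset.sum_congr rfl fun i _ => by
            simp [hlam', add_smul, smul_smul]
        have hD' : Dᵀ.mulVec mu' = Dᵀ.mulVec mu + t • ∑ j, β j • D j := by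
          rw [transpose_mulVec_eq_sum, transpose_mulVec_eq_sum, Finset.smul_sum,
            ← Finset.sum_add_distrib]
          exact Finset.sum_congr rfl fun j _ => by
            simp [hmu', add_smul, smul_smul]
        rw [hC', hD']
        have : (Cᵀ.mulVec lam + t • ∑ i, α i • C i) + (Dᵀ.mulVec mu + t • ∑ j, β j • D j)
            = (Cᵀ.mulVec lam + Dᵀ.mulVec mu) + t • (∑ i, α i • C i + ∑ j, β j • D j) := by
          rw [smul_add]
          abel
        rw [this, hrel, hstat]
        simp
      have hstrict : Finset.univ.filter (fun i => lam' i ≠ 0) ⊂ K₀ := by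
        rw [Finset.ssubset_iff_of_subset]
        · refine ⟨j0, (hK₀ j0).mpr (ne_of_lt hlamj0), ?_⟩
          simp [hj0']
        · intro i hi
          exact (hK₀ i).mpr (hsub i (by simpa using hi))
      have hcard' : (Finset.univ.filter (fun i => lam' i ≠ 0)).card ≤ N := by
        have := Finset.card_lt_card hstrict
        omega
      exact ih lam' mu' hcard' hstat' hle' (fun i hi => hP i (hsub i hi))

end Aux


/-- Nonemptiness of the collection `K(x)` defining the generalized HS-Jacobian: for the
minimizer `s` of a strongly convex QP over a polyhedron `{x : Cx ≥ c, Dx = d}` there are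
multipliers `λ, μ` and an index set `K` with `supp(λ) ⊆ K ⊆ I(x)` such that
`[C_Kᵀ Dᵀ]` has full column rank. -/
theorem hs_jacobian_index_set_exists {k l n : ℕ}
    (C : Matrix (Fin k) (Fin n) ℝ) (D : Matrix (Fin l) (Fin n) ℝ)
    (hD : D.rank = l)
    (c : Fin k → ℝ) (d : Fin l → ℝ)
    (hfeas : ∃ x : Fin n → ℝ, (∀ i, c i ≤ C.mulVec x i) ∧ D.mulVec x = d)
    (Q : Matrix (Fin n) (Fin n) ℝ) (hQ : Q.PosDef)
    (xbar : Fin n → ℝ) (s : Fin n → ℝ)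
    (hsfeas : (∀ i, c i ≤ C.mulVec s i) ∧ D.mulVec s = d)
    (hsmin : ∀ x : Fin n → ℝ, (∀ i, c i ≤ C.mulVec x i) → D.mulVec x = d →
      (1/2) * dot s (Q.mulVec s) - dot xbar s ≤ (1/2) * dot x (Q.mulVec x) - dot xbar x) :
    ∃ (lam : Fin k → ℝ) (mu : Fin l → ℝ) (K : Finset (Fin k)),
      Q.mulVec s - xbar + Cᵀ.mulVec lam + Dᵀ.mulVec mu = 0 ∧
      (∀ i, c i ≤ C.mulVec s i) ∧ D.mulVec s = d ∧
      (∀ i, lam i ≤ 0) ∧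
      (∀ i, lam i * (C.mulVec s i - c i) = 0) ∧
      (∀ i, lam i ≠ 0 → i ∈ K) ∧
      (∀ i ∈ K, C.mulVec s i = c i) ∧
      (Matrix.of fun (x : Fin n) (j : {i // i ∈ K} ⊕ Fin l) =>
        Sum.elim (fun i : {i // i ∈ K} => C (i : Fin k) x) (fun i : Fin l => D i x) j).rank
        = K.card + l := by
  classical
  have hDind : LinearIndependent ℝ (fun j : Fin l => D j) := by
    rw [linearIndependent_iff_card_eq_finrank_span]
    have h1 := Matrix.rank_eq_finrank_span_row D
    rw [hD] at h1
    simp only [Fintype.card_fin, Set.finrank]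
    exact h1
  obtain ⟨lam0, mu0, hstat0, hle0, hact0⟩ :=
    kkt_exists C D c d Q hQ xbar s hsfeas
      (fun x hx hdx => by simpa [dot] using hsmin x hx hdx)
  obtain ⟨lam, mu, K, hstat, hle, hmemK, hKact, hlin⟩ :=
    reduce C D hDind (xbar - Q.mulVec s) (fun i => C.mulVec s i = c i)
      (Finset.univ.filter (fun i => lam0 i ≠ 0)).card lam0 mu0 le_rfl hstat0 hle0 hact0
  refine ⟨lam, mu, K, ?_, hsfeas.1, hsfeas.2, hle, ?_, hmemK, hKact, ?_⟩
  · rw [add_assoc, hstat]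
    abel
  · intro i
    by_cases hi : lam i = 0
    · rw [hi, zero_mul]
    · rw [hKact i (hmemK i hi)]
      ring
  · set M : Matrix (Fin n) ({i // i ∈ K} ⊕ Fin l) ℝ :=
      Matrix.of fun (x : Fin n) (j : {i // i ∈ K} ⊕ Fin l) =>
        Sum.elim (fun i : {i // i ∈ K} => C (i : Fin k) x) (fun i : Fin l => D i x) j with hM
    have hfam : (Mᵀ : Matrix ({i // i ∈ K} ⊕ Fin l) (Fin n) ℝ)
        = fun j => Sum.elim (fun i : {i // i ∈ K} => C (i : Fin k)) (fun j : Fin l => D j) j := by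
      funext j x
      cases j <;> rfl
    have hlin' : LinearIndependent ℝ (Mᵀ : Matrix ({i // i ∈ K} ⊕ Fin l) (Fin n) ℝ) := by
      rw [hfam]
      exact hlin
    calc M.rank = Mᵀ.rank := (Matrix.rank_transpose M).symm
      _ = Fintype.card ({i // i ∈ K} ⊕ Fin l) := hlin'.rank_matrix
      _ = K.card + l := by simp [Fintype.card_sum, Fintype.card_coe]
end
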